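/- arXiv:1402.5111 — 8 statements merged into one kernel-verified Lean document; each statement's English description precedes it below -/
import Mathlib

section
/- Let m and n be positive integers and let S ⊆ [m]×[n]. The set of points {(e_i, e_j) : (i,j) ∈ S} is affinely independent in ℝ^m×ℝ^n if and only if the bipartite graph on vertex set [m] ⊔ [n] with edge set S contains no cycle. -/
/-!
The first coordinates of each point `(e_i, e_j)` sum to `1`, so affine and linear independence
coincide. Along a cycle, the points of its edges, signed by the direction in which the cycle
traverses them, sum to zero. Conversely, in a forest every edge `ij` is a bridge, and the indicator
`χ` of the component of `i` after deleting `ij` is constant along every other edge; pairing a linear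
relation with `(x, y) ↦ ∑ χ(i) x_i - ∑ χ(j) y_j` therefore isolates the coefficient of `ij`.
-/

/-- The point `(e_i, e_j)` of `Δ_{m-1} × Δ_{n-1} ⊆ ℝ^m × ℝ^n`. -/
noncomputable def vtx (m n : ℕ) (p : Fin m × Fin n) : (Fin m → ℝ) × (Fin n → ℝ) :=
  (Pi.single p.1 1, Pi.single p.2 1)

/-- The bipartite graph on `[m] ⊔ [n]` with edge set `S`. -/
def bipGraph (m n : ℕ) (S : Finset (Fin m × Fin n)) : SimpleGraph (Fin m ⊕ Fin n) where
  Adj u v := (∃ p ∈ S, u = Sum.inl p.1 ∧ v = Sum.inr p.2) ∨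
             (∃ p ∈ S, u = Sum.inr p.2 ∧ v = Sum.inl p.1)
  symm := by
    refine ⟨?_⟩
    rintro u v (⟨p, hp, rfl, rfl⟩ | ⟨p, hp, rfl, rfl⟩)
    · exact Or.inr ⟨p, hp, rfl, rfl⟩
    · exact Or.inl ⟨p, hp, rfl, rfl⟩
  loopless := by
    refine ⟨?_⟩
    rintro u (⟨p, hp, h1, h2⟩ | ⟨p, hp, h1, h2⟩) <;> simp_all

theorem affineIndependent_iff_linearIndependent_of_map_eq_one {k V ι : Type*} [Ring k]
    [AddCommGroup V] [Module k V] {p : ι → V} (ℓ : V →ₗ[k] k) (hℓ : ∀ i, ℓ (p i) = 1) :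
    AffineIndependent k p ↔ LinearIndependent k p := by
  refine ⟨fun h ↦ linearIndependent_iff'.2 fun s w hwp ↦ ?_, fun h ↦ h.affineIndependent k⟩
  refine affineIndependent_iff.1 h s w ?_ hwp
  simpa [hℓ] using congrArg ℓ hwp

namespace SimpleGraph

theorem Walk.sum_map_darts_sub {V M : Type*} [AddCommGroup M] {G : SimpleGraph V} {u v : V}
    (c : G.Walk u v) (f : V → M) : (c.darts.map fun d ↦ f d.fst - f d.snd).sum = f u - f v := by
  induction c with
  | nil => simp
  | cons h c ih => simp [ih]

theorem IsBridge.exists_cut_indicator {V R : Type*} [Zero R] [One R] {G : SimpleGraph V} {u v : V}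
    (h : G.IsBridge s(u, v)) :
    ∃ χ : V → R, χ u = 1 ∧ χ v = 0 ∧ ∀ x y, G.Adj x y → s(x, y) ≠ s(u, v) → χ x = χ y := by
  classical
  set H := G.deleteEdges {s(u, v)}
  refine ⟨fun x ↦ if H.Reachable u x then 1 else 0, if_pos (Reachable.refl u),
    if_neg (isBridge_iff.1 h), fun x y hxy hne ↦ ?_⟩
  have hH : H.Adj x y := by simp [H, hxy, hne]
  have hreach : H.Reachable u x ↔ H.Reachable u y :=
    ⟨fun r ↦ r.trans hH.reachable, fun r ↦ r.trans hH.symm.reachable⟩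
  simp only [hreach]

end SimpleGraph

open SimpleGraph

section

variable {m n : ℕ}

theorem coprod_linearCombination_vtx (χ : Fin m → ℝ) (ψ : Fin n → ℝ) (p : Fin m × Fin n) :
    (Fintype.linearCombination ℝ χ).coprod (Fintype.linearCombination ℝ ψ) (vtx m n p) =
      χ p.1 + ψ p.2 := by
  simp [vtx, Fintype.linearCombination_apply_single]

theorem affineIndependent_vtx_iff_linearIndepOn (s : Set (Fin m × Fin n)) :
    AffineIndependent ℝ (fun p : s ↦ vtx m n p) ↔ LinearIndepOn ℝ (vtx m n) s := by
  refine affineIndependent_iff_linearIndependent_of_map_eq_one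
    ((Fintype.linearCombination ℝ 1).coprod (Fintype.linearCombination ℝ 0)) fun p ↦ ?_
  rw [coprod_linearCombination_vtx, Pi.one_apply, Pi.zero_apply, add_zero]

variable {S : Finset (Fin m × Fin n)}

theorem linearIndepOn_vtx_of_isAcyclic (h : (bipGraph m n S).IsAcyclic) :
    LinearIndepOn ℝ (vtx m n) S := by
  rw [linearIndepOn_finset_iff]
  intro w hw p hp
  obtain ⟨χ, hχp₁, hχp₂, hχ⟩ :=
    (isAcyclic_iff_forall_adj_isBridge.1 h (Or.inl ⟨p, hp, rfl, rfl⟩)).exists_cut_indicator (R := ℝ)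
  have hpair := congrArg ((Fintype.linearCombination ℝ (χ ∘ Sum.inl)).coprod
    (Fintype.linearCombination ℝ (-(χ ∘ Sum.inr)))) hw
  simp only [map_sum, map_smul, coprod_linearCombination_vtx, map_zero,
    Function.comp_apply, Pi.neg_apply] at hpair
  rw [Finset.sum_eq_single_of_mem p hp] at hpair
  · simpa [hχp₁, hχp₂] using hpair
  · intro q hq hqp
    rw [hχ _ _ (Or.inl ⟨q, hq, rfl, rfl⟩) (by simpa [Prod.ext_iff] using hqp)]
    simp

-- `vtx m n (i, j) = vertexPotential (inl i) - vertexPotential (inr j)`, so the points of the edges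
-- of a closed walk, signed by the direction of traversal, telescope to zero.
noncomputable def vertexPotential (m n : ℕ) : Fin m ⊕ Fin n → (Fin m → ℝ) × (Fin n → ℝ) :=
  Sum.elim (fun i ↦ (Pi.single i 1, 0)) (fun j ↦ (0, -Pi.single j 1))

theorem exists_vertexPotential_sub_eq_smul_vtx (d : (bipGraph m n S).Dart) :
    ∃ p ∈ S, d.edge = s(Sum.inl p.1, Sum.inr p.2) ∧ ∃ ε : ℝ, ε ≠ 0 ∧
      vertexPotential m n d.fst - vertexPotential m n d.snd = ε • vtx m n p := by
  obtain ⟨⟨a, b⟩, ⟨p, hp, ha, hb⟩ | ⟨p, hp, ha, hb⟩⟩ := d <;> dsimp only at ha hb <;> subst ha hb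
  · exact ⟨p, hp, rfl, 1, one_ne_zero, by simp [vertexPotential, vtx]⟩
  · exact ⟨p, hp, Sym2.eq_swap, -1, by norm_num, by simp [vertexPotential, vtx]⟩

theorem isAcyclic_of_linearIndepOn_vtx (h : LinearIndepOn ℝ (vtx m n) S) :
    (bipGraph m n S).IsAcyclic := by
  intro v c hc
  choose p hpS hedge ε hε hpot using exists_vertexPotential_sub_eq_smul_vtx (S := S)
  have hedges : (c.darts.map Dart.edge).Nodup := hc.edges_nodup
  have hinj : Set.InjOn p c.darts.toFinset := fun d hd d' hd' hdd' ↦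
    List.inj_on_of_nodup_map hedges (List.mem_toFinset.1 hd) (List.mem_toFinset.1 hd')
      (by rw [hedge, hedge, hdd'])
  have hli : LinearIndepOn ℝ (vtx m n ∘ p) c.darts.toFinset :=
    (h.mono (by rintro _ ⟨d, -, rfl⟩; exact hpS d)).comp_of_image hinj
  have hsum : ∑ d ∈ c.darts.toFinset, ε d • (vtx m n ∘ p) d = 0 := by
    rw [List.sum_toFinset _ hedges.of_map]
    simp only [Function.comp_apply, ← hpot, Walk.sum_map_darts_sub, sub_self]
  obtain ⟨d, hd⟩ := List.exists_mem_of_ne_nil c.darts (by simpa using hc.not_nil)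
  exact hε d (linearIndepOn_finset_iff.1 hli ε hsum d (List.mem_toFinset.2 hd))

end

theorem dyckpaths_stmt0_general (m n : ℕ)
    (S : Finset (Fin m × Fin n)) :
    AffineIndependent ℝ (fun p : S => vtx m n (p : Fin m × Fin n)) ↔
      (bipGraph m n S).IsAcyclic :=
  (affineIndependent_vtx_iff_linearIndepOn (S : Set (Fin m × Fin n))).trans
    ⟨isAcyclic_of_linearIndepOn_vtx, linearIndepOn_vtx_of_isAcyclic⟩

/-- The points `{(e_i, e_j) : (i,j) ∈ S}` are affinely independent iff the
bipartite graph on `[m] ⊔ [n]` with edge set `S` contains no cycle. -/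
theorem dyckpaths_stmt0 (m n : ℕ) (hm : 0 < m) (hn : 0 < n)
    (S : Finset (Fin m × Fin n)) :
    AffineIndependent ℝ (fun p : S => vtx m n (p : Fin m × Fin n)) ↔
      (bipGraph m n S).IsAcyclic :=
  dyckpaths_stmt0_general m n S
end

section
/- For every positive integer n and all subsets I, J ⊆ [n] with |I| = |J|, there exists exactly one perfect matching between I and J that belongs to the family ℳ_n. -/
/-!
An nc+wi perfect matching between `I₀` and `J₀` has to pair the `r`-th smallest element of `I₀`
with the `r`-th smallest element of `J₀`, and this order matching is weakly increasing iff
`rank J₀ x ≤ rank I₀ x` for all `x` (a ballot condition). Pulling `I` and `J` back along the shift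
`σ_c`, the ballot condition says exactly that `c` maximises `rank J y - rank I y` over `0 ≤ y ≤ n`;
a maximiser exists, which gives existence. For any `c`, the `c`-shift of the order matching of the
pulled-back sets pairs `i ∈ I` with `j ∈ J` iff `rank I i - rank J j ≡ rank I c - rank J c` modulo
`|I|`, and the right-hand side takes the same value at every maximiser, which gives uniqueness.
-/

/-- `M` is a perfect matching between `I` and `J`: every pair of `M` lies in `I × J`,
and every element of `I` and of `J` occurs in exactly one pair of `M`. -/
def IsPM (I J : Finset ℕ) (M : Finset (ℕ × ℕ)) : Prop :=
  (∀ p ∈ M, p.1 ∈ I ∧ p.2 ∈ J) ∧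
  (∀ i ∈ I, ∃! j : ℕ, (i, j) ∈ M) ∧
  (∀ j ∈ J, ∃! i : ℕ, (i, j) ∈ M)

/-- The cyclic shift `σ_ℓ(a) = ((a - 1 + ℓ) mod n) + 1` on `[n] = {1, …, n}`. -/
def cycShift (n ℓ a : ℕ) : ℕ := (a - 1 + ℓ) % n + 1

/-- `M` is non-crossing and weakly increasing (nc+wi). -/
def NCWI (M : Finset (ℕ × ℕ)) : Prop :=
  (∀ p ∈ M, ∀ q ∈ M, p.1 < q.1 → p.2 < q.2) ∧ (∀ p ∈ M, p.1 ≤ p.2)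

/-- The family `ℳ_n`: all `ℓ`-shifts (`0 ≤ ℓ < n`) of nc+wi perfect matchings on
subsets of `[n] = {1, …, n}`. -/
def MemDyckFamily (n : ℕ) (M : Finset (ℕ × ℕ)) : Prop :=
  ∃ ℓ < n, ∃ M₀ : Finset (ℕ × ℕ),
    (∀ p ∈ M₀, p.1 ∈ Finset.Icc 1 n ∧ p.2 ∈ Finset.Icc 1 n) ∧
    IsPM (M₀.image Prod.fst) (M₀.image Prod.snd) M₀ ∧
    NCWI M₀ ∧
    M = M₀.image (fun p => (cycShift n ℓ p.1, cycShift n ℓ p.2))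

namespace CyclicMatching

open Finset

def rank (S : Finset ℕ) (a : ℕ) : ℕ := #(S.filter (· ≤ a))

def orderMatching (I J : Finset ℕ) : Finset (ℕ × ℕ) :=
  (I ×ˢ J).filter fun p => rank I p.1 = rank J p.2

def shiftPairs (n ℓ : ℕ) (M : Finset (ℕ × ℕ)) : Finset (ℕ × ℕ) :=
  M.image fun p => (cycShift n ℓ p.1, cycShift n ℓ p.2)

/-- The preimage of `S ⊆ [n]` under `σ_c`, since `σ_{n-c}` inverts `σ_c` on `[n]`. -/
def unshift (n c : ℕ) (S : Finset ℕ) : Finset ℕ := S.image (cycShift n (n - c))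

section Rank

variable {S : Finset ℕ} {a b : ℕ}

lemma rank_lt_rank (ha : a ∈ S) (hba : b < a) : rank S b < rank S a :=
  card_lt_card <| (ssubset_iff_of_subset <| monotone_filter_right S fun _ _ h => h.trans hba.le).2
    ⟨a, by simp [ha], by simp [hba]⟩

lemma rank_mono (S : Finset ℕ) : Monotone (rank S) := fun _ _ hab =>
  card_le_card <| monotone_filter_right S fun _ _ h => h.trans hab

lemma rank_injOn (S : Finset ℕ) : Set.InjOn (rank S) S :=
  StrictMonoOn.injOn fun _ _ _ hb h => rank_lt_rank hb h

lemma rank_mem_Icc (ha : a ∈ S) : rank S a ∈ Icc 1 #S :=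
  mem_Icc.2 ⟨card_pos.2 ⟨a, mem_filter.2 ⟨ha, le_rfl⟩⟩, card_filter_le _ _⟩

lemma exists_rank_eq {r : ℕ} (hr : r ∈ Icc 1 #S) : ∃ a ∈ S, rank S a = r :=
  surjOn_of_injOn_of_card_le (rank S) (fun _ ha => rank_mem_Icc ha) (rank_injOn S)
    (by simp) hr

end Rank

section Matching

variable {I J : Finset ℕ} {M : Finset (ℕ × ℕ)}

@[simp]
lemma mem_orderMatching {i j : ℕ} :
    (i, j) ∈ orderMatching I J ↔ i ∈ I ∧ j ∈ J ∧ rank I i = rank J j := by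
  simp [orderMatching, and_assoc]

lemma orderMatching_isPM (hk : #I = #J) : IsPM I J (orderMatching I J) := by
  refine ⟨fun p hp => by simp_all [orderMatching], fun i hi => ?_, fun j hj => ?_⟩
  · obtain ⟨j, hj, hji⟩ := exists_rank_eq (hk ▸ rank_mem_Icc hi : rank I i ∈ Icc 1 #J)
    exact ⟨j, by simp [hi, hj, hji], fun j' h' => by
      simp only [mem_orderMatching] at h'
      exact rank_injOn J h'.2.1 hj (h'.2.2.symm.trans hji.symm)⟩
  · obtain ⟨i, hi, hij⟩ := exists_rank_eq (hk ▸ rank_mem_Icc hj : rank J j ∈ Icc 1 #I)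
    exact ⟨i, by simp [hi, hj, hij], fun i' h' => by
      simp only [mem_orderMatching] at h'
      exact rank_injOn I h'.1 hi (h'.2.2.trans hij.symm)⟩

lemma orderMatching_strictMono :
    ∀ p ∈ orderMatching I J, ∀ q ∈ orderMatching I J, p.1 < q.1 → p.2 < q.2 := by
  rintro ⟨i, j⟩ hp ⟨i', j'⟩ hq (h : i < i')
  simp only [mem_orderMatching] at hp hq
  show j < j'
  by_contra! hj
  have := rank_mono J hj
  have := rank_lt_rank hq.1 h
  omega

lemma orderMatching_weaklyIncreasing (hIJ : ∀ j ∈ J, rank J j ≤ rank I j) :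
    ∀ p ∈ orderMatching I J, p.1 ≤ p.2 := by
  rintro ⟨i, j⟩ hp
  simp only [mem_orderMatching] at hp
  show i ≤ j
  by_contra! h
  have := hIJ j hp.2.1
  have := rank_lt_rank hp.1 h
  omega

namespace IsPM

lemma image_fst (hM : IsPM I J M) : M.image Prod.fst = I := by
  ext i
  simp only [mem_image, Prod.exists, exists_and_right, exists_eq_right]
  exact ⟨fun ⟨j, hj⟩ => (hM.1 _ hj).1, fun hi => (hM.2.1 i hi).exists⟩

lemma image_snd (hM : IsPM I J M) : M.image Prod.snd = J := by
  ext j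
  simp only [mem_image, Prod.exists, exists_eq_right]
  exact ⟨fun ⟨i, hi⟩ => (hM.1 _ hi).2, fun hj => (hM.2.2 j hj).exists⟩

lemma fst_injOn (hM : IsPM I J M) : Set.InjOn Prod.fst (M : Set (ℕ × ℕ)) := by
  rintro ⟨i, j⟩ hp ⟨i', j'⟩ hq (rfl : i = i')
  rw [(hM.2.1 i (hM.1 _ hp).1).unique hp hq]

lemma rank_fst_eq (hM : IsPM I J M) (x : ℕ) : rank I x = #(M.filter fun p => p.1 ≤ x) := by
  rw [rank, ← image_fst hM, filter_image,
    card_image_of_injOn ((fst_injOn hM).mono (coe_subset.2 (filter_subset _ _)))]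

lemma snd_injOn (hM : IsPM I J M) : Set.InjOn Prod.snd (M : Set (ℕ × ℕ)) := by
  rintro ⟨i, j⟩ hp ⟨i', j'⟩ hq (rfl : j = j')
  rw [(hM.2.2 j (hM.1 _ hp).2).unique hp hq]

lemma rank_snd_eq (hM : IsPM I J M) (x : ℕ) : rank J x = #(M.filter fun p => p.2 ≤ x) := by
  rw [rank, ← image_snd hM, filter_image,
    card_image_of_injOn ((snd_injOn hM).mono (coe_subset.2 (filter_subset _ _)))]

lemma rank_snd_le_rank_fst (hM : IsPM I J M) (hwi : ∀ p ∈ M, p.1 ≤ p.2) (x : ℕ) :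
    rank J x ≤ rank I x := by
  rw [rank_fst_eq hM, rank_snd_eq hM]
  exact card_le_card <| monotone_filter_right M fun p hp h => (hwi p hp).trans h

lemma eq_orderMatching (hM : IsPM I J M) (hnc : ∀ p ∈ M, ∀ q ∈ M, p.1 < q.1 → p.2 < q.2) :
    M = orderMatching I J := by
  have hrank : ∀ i j, (i, j) ∈ M → rank I i = rank J j := by
    intro i j hij
    rw [rank_fst_eq hM, rank_snd_eq hM]
    congr 1
    refine filter_congr fun p hp => ⟨fun h => ?_, fun h => ?_⟩
    · rcases h.lt_or_eq with h | h
      · exact (hnc p hp _ hij h).le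
      · rw [fst_injOn hM hp hij h]
    · by_contra! h'
      exact (hnc _ hij p hp h').not_ge h
  ext ⟨i, j⟩
  refine ⟨fun hij => ?_, fun h => ?_⟩
  · exact mem_orderMatching.2 ⟨(hM.1 _ hij).1, (hM.1 _ hij).2, hrank i j hij⟩
  · obtain ⟨hi, hj, hij⟩ := mem_orderMatching.1 h
    obtain ⟨j', hj', -⟩ := hM.2.1 i hi
    rwa [rank_injOn J hj (hM.1 _ hj').2 (hij.symm.trans (hrank i j' hj'))]

lemma image (hM : IsPM I J M) {f : ℕ → ℕ} (hfI : Set.InjOn f I) (hfJ : Set.InjOn f J) :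
    IsPM (I.image f) (J.image f) (M.image fun p => (f p.1, f p.2)) := by
  refine ⟨?_, ?_, ?_⟩
  · simp only [mem_image]
    rintro _ ⟨q, hq, rfl⟩
    exact ⟨⟨q.1, (hM.1 q hq).1, rfl⟩, ⟨q.2, (hM.1 q hq).2, rfl⟩⟩
  · simp only [mem_image, forall_exists_index, and_imp, forall_apply_eq_imp_iff₂]
    intro i hi
    obtain ⟨j, hj, huniq⟩ := hM.2.1 i hi
    refine ⟨f j, ⟨(i, j), hj, rfl⟩, ?_⟩
    rintro _ ⟨⟨i', j'⟩, hq, hq'⟩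
    simp only [Prod.mk.injEq] at hq'
    obtain rfl := hfI (hM.1 _ hq).1 hi hq'.1
    rw [← hq'.2, huniq j' hq]
  · simp only [mem_image, forall_exists_index, and_imp, forall_apply_eq_imp_iff₂]
    intro j hj
    obtain ⟨i, hi, huniq⟩ := hM.2.2 j hj
    refine ⟨f i, ⟨(i, j), hi, rfl⟩, ?_⟩
    rintro _ ⟨⟨i', j'⟩, hq, hq'⟩
    simp only [Prod.mk.injEq] at hq'
    obtain rfl := hfJ (hM.1 _ hq).2 hj hq'.2
    rw [← hq'.1, huniq i' hq]

end IsPM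

end Matching

section Shift

variable {n c : ℕ}

lemma cycShift_mem_Icc (hn : 0 < n) (ℓ a : ℕ) : cycShift n ℓ a ∈ Icc 1 n := by
  have := Nat.mod_lt (a - 1 + ℓ) hn
  simp only [cycShift, mem_Icc]
  omega

lemma cycShift_cycShift (x y a : ℕ) :
    cycShift n x (cycShift n y a) = cycShift n (y + x) a := by
  simp only [cycShift, Nat.add_sub_cancel, Nat.mod_add_mod, Nat.add_assoc]

lemma cycShift_self {a : ℕ} (ha : a ∈ Icc 1 n) : cycShift n n a = a := by
  rw [mem_Icc] at ha
  rw [cycShift, Nat.add_mod_right, Nat.mod_eq_of_lt (by omega)]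
  omega

lemma cycShift_mod (ℓ : ℕ) : cycShift n (ℓ % n) = cycShift n ℓ := by
  ext a
  rw [cycShift, cycShift, Nat.add_mod_mod]

lemma cycShift_sub_of_le {a : ℕ} (hc : c ≤ n) (ha : 1 ≤ a) (hac : a ≤ c) :
    cycShift n (n - c) a = a + n - c := by
  rw [cycShift, Nat.mod_eq_of_lt (by omega)]
  omega

lemma cycShift_sub_of_lt {a : ℕ} (ha : a ≤ n) (hca : c < a) : cycShift n (n - c) a = a - c := by
  rw [cycShift, Nat.mod_eq_sub_mod (by omega), Nat.mod_eq_of_lt (by omega)]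
  omega

lemma leftInvOn_cycShift_sub (hc : c ≤ n) :
    Set.LeftInvOn (cycShift n (n - c)) (cycShift n c) (Icc 1 n : Set ℕ) := fun a ha => by
  rw [cycShift_cycShift, Nat.add_sub_cancel' hc, cycShift_self ha]

lemma leftInvOn_cycShift (hc : c ≤ n) :
    Set.LeftInvOn (cycShift n c) (cycShift n (n - c)) (Icc 1 n : Set ℕ) := fun a ha => by
  rw [cycShift_cycShift, Nat.sub_add_cancel hc, cycShift_self ha]

variable {S : Finset ℕ}

lemma unshift_subset (hn : 0 < n) : unshift n c S ⊆ Icc 1 n := by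
  simp only [unshift, image_subset_iff]
  exact fun a _ => cycShift_mem_Icc hn _ a

lemma image_unshift (hc : c ≤ n) (hS : S ⊆ Icc 1 n) : (unshift n c S).image (cycShift n c) = S := by
  rw [unshift, image_image]
  exact (image_congr fun a ha => leftInvOn_cycShift hc (hS ha)).trans image_id

lemma unshift_image (hc : c ≤ n) (hS : S ⊆ Icc 1 n) : unshift n c (S.image (cycShift n c)) = S := by
  rw [unshift, image_image]
  exact (image_congr fun a ha => leftInvOn_cycShift_sub hc (hS ha)).trans image_id

lemma rank_unshift (hc : c ≤ n) (hS : S ⊆ Icc 1 n) (x : ℕ) :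
    rank (unshift n c S) x = #(S.filter fun a => cycShift n (n - c) a ≤ x) := by
  rw [rank, unshift, filter_image, card_image_of_injOn]
  exact (leftInvOn_cycShift hc).injOn.mono (coe_subset.2 ((filter_subset _ _).trans hS))

lemma card_unshift (hc : c ≤ n) (hS : S ⊆ Icc 1 n) : #(unshift n c S) = #S :=
  card_image_of_injOn ((leftInvOn_cycShift hc).injOn.mono (coe_subset.2 hS))

lemma rank_unshift_add_rank {x y : ℕ} (hc : c ≤ n) (hS : S ⊆ Icc 1 n) (hy : y ≤ n)
    (hxy : c + x = y) : rank (unshift n c S) x + rank S c = rank S y := by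
  rw [rank_unshift hc hS, rank, rank, card_filter, card_filter, card_filter, ← sum_add_distrib]
  refine sum_congr rfl fun a ha => ?_
  obtain ⟨ha1, han⟩ := mem_Icc.1 (hS ha)
  rcases le_or_gt a c with hac | hca
  · rw [cycShift_sub_of_le hc ha1 hac]
    split_ifs <;> omega
  · rw [cycShift_sub_of_lt han hca]
    split_ifs <;> omega

lemma rank_unshift_add_rank_of_wrap {x y : ℕ} (hc : c ≤ n) (hS : S ⊆ Icc 1 n) (hx : x ≤ n)
    (hxy : c + x = y + n) : rank (unshift n c S) x + rank S c = rank S y + #S := by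
  rw [rank_unshift hc hS, rank, rank, card_filter, card_filter, card_filter, card_eq_sum_ones S,
    ← sum_add_distrib, ← sum_add_distrib]
  refine sum_congr rfl fun a ha => ?_
  obtain ⟨ha1, han⟩ := mem_Icc.1 (hS ha)
  rcases le_or_gt a c with hac | hca
  · rw [cycShift_sub_of_le hc ha1 hac]
    split_ifs <;> omega
  · rw [cycShift_sub_of_lt han hca]
    split_ifs <;> omega

end Shift

section Cyclic

lemma exists_rank_sub_rank_max (n : ℕ) (I J : Finset ℕ) :
    ∃ c ≤ n, ∀ y ≤ n, rank J y + rank I c ≤ rank I y + rank J c := by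
  obtain ⟨c, hc, hmax⟩ :=
    exists_max_image (range (n + 1)) (fun y => (rank J y : ℤ) - rank I y) ⟨0, by simp⟩
  refine ⟨c, Nat.lt_succ_iff.1 (mem_range.1 hc), fun y hy => ?_⟩
  have := hmax y (mem_range.2 (Nat.lt_succ_of_le hy))
  omega

variable {n c : ℕ} {I J : Finset ℕ}

lemma rank_unshift_le_iff (hc : c ≤ n) (hI : I ⊆ Icc 1 n) (hJ : J ⊆ Icc 1 n) (hk : #I = #J) :
    (∀ x ≤ n, rank (unshift n c J) x ≤ rank (unshift n c I) x) ↔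
      ∀ y ≤ n, rank J y + rank I c ≤ rank I y + rank J c := by
  constructor
  · intro h y hy
    rcases le_total c y with hcy | hyc
    · have := h (y - c) (by omega)
      have := rank_unshift_add_rank (x := y - c) hc hI hy (by omega)
      have := rank_unshift_add_rank (x := y - c) hc hJ hy (by omega)
      omega
    · have := h (y + n - c) (by omega)
      have := rank_unshift_add_rank_of_wrap (x := y + n - c) (y := y) hc hI (by omega) (by omega)
      have := rank_unshift_add_rank_of_wrap (x := y + n - c) (y := y) hc hJ (by omega) (by omega)
      omega
  · intro h x hx
    rcases le_or_gt (c + x) n with hle | hgt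
    · have := h (c + x) hle
      have := rank_unshift_add_rank hc hI hle rfl
      have := rank_unshift_add_rank hc hJ hle rfl
      omega
    · have := h (c + x - n) (by omega)
      have := rank_unshift_add_rank_of_wrap (y := c + x - n) hc hI hx (by omega)
      have := rank_unshift_add_rank_of_wrap (y := c + x - n) hc hJ hx (by omega)
      omega

lemma rank_unshift_modEq {S : Finset ℕ} (hc : c ≤ n) (hS : S ⊆ Icc 1 n) {a : ℕ} (ha : a ∈ S) :
    (rank (unshift n c S) (cycShift n (n - c) a) : ℤ) ≡ rank S a - rank S c [ZMOD #S] := by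
  obtain ⟨ha1, han⟩ := mem_Icc.1 (hS ha)
  rw [Int.modEq_iff_dvd]
  rcases le_or_gt a c with hac | hca
  · rw [cycShift_sub_of_le hc ha1 hac]
    have := rank_unshift_add_rank_of_wrap (x := a + n - c) (y := a) hc hS (by omega) (by omega)
    exact ⟨-1, by omega⟩
  · rw [cycShift_sub_of_lt han hca]
    have := rank_unshift_add_rank (x := a - c) (y := a) hc hS han (by omega)
    exact ⟨0, by omega⟩

lemma rank_unshift_eq_iff (hc : c ≤ n) (hI : I ⊆ Icc 1 n) (hJ : J ⊆ Icc 1 n) (hk : #I = #J)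
    {i j : ℕ} (hi : i ∈ I) (hj : j ∈ J) :
    rank (unshift n c I) (cycShift n (n - c) i) = rank (unshift n c J) (cycShift n (n - c) j) ↔
      (rank I i : ℤ) - rank J j ≡ rank I c - rank J c [ZMOD #I] := by
  have hi' := rank_unshift_modEq hc hI hi
  have hj' := rank_unshift_modEq hc hJ hj
  rw [← hk] at hj'
  have hcongr : (rank I i : ℤ) - rank J j ≡ rank I c - rank J c [ZMOD #I] ↔
      (rank I i : ℤ) - rank I c ≡ rank J j - rank J c [ZMOD #I] := by
    rw [Int.modEq_iff_dvd, Int.modEq_iff_dvd]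
    ring_nf
  rw [hcongr]
  refine ⟨fun h => hi'.symm.trans (h ▸ hj'), fun h => ?_⟩
  have hbi := rank_mem_Icc (mem_image_of_mem (cycShift n (n - c)) hi)
  have hbj := rank_mem_Icc (mem_image_of_mem (cycShift n (n - c)) hj)
  rw [← unshift, card_unshift hc hI] at hbi
  rw [← unshift, card_unshift hc hJ, ← hk] at hbj
  rw [mem_Icc] at hbi hbj
  have := Int.eq_zero_of_abs_lt_dvd (hi'.trans (h.trans hj'.symm)).dvd
    (abs_lt.2 ⟨by omega, by omega⟩)
  omega

end Cyclic

section Family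

variable {n c : ℕ} {I J : Finset ℕ}

lemma image_fst_shiftPairs (ℓ : ℕ) (M : Finset (ℕ × ℕ)) :
    (shiftPairs n ℓ M).image Prod.fst = (M.image Prod.fst).image (cycShift n ℓ) := by
  simp only [shiftPairs, image_image]
  rfl

lemma image_snd_shiftPairs (ℓ : ℕ) (M : Finset (ℕ × ℕ)) :
    (shiftPairs n ℓ M).image Prod.snd = (M.image Prod.snd).image (cycShift n ℓ) := by
  simp only [shiftPairs, image_image]
  rfl

lemma mem_shiftPairs_orderMatching_unshift (hc : c ≤ n) (hI : I ⊆ Icc 1 n)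
    (hJ : J ⊆ Icc 1 n) (hk : #I = #J) {i j : ℕ} :
    (i, j) ∈ shiftPairs n c (orderMatching (unshift n c I) (unshift n c J)) ↔
      i ∈ I ∧ j ∈ J ∧ (rank I i : ℤ) - rank J j ≡ rank I c - rank J c [ZMOD #I] := by
  have hσ := leftInvOn_cycShift hc
  constructor
  · simp only [shiftPairs, unshift, mem_image, Prod.exists, mem_orderMatching, Prod.mk.injEq]
    rintro ⟨_, _, ⟨⟨i₀, hi₀, rfl⟩, ⟨j₀, hj₀, rfl⟩, hrank⟩, rfl, rfl⟩
    rw [hσ (hI hi₀), hσ (hJ hj₀)]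
    exact ⟨hi₀, hj₀, (rank_unshift_eq_iff hc hI hJ hk hi₀ hj₀).1 hrank⟩
  · rintro ⟨hi, hj, hmod⟩
    refine mem_image.2 ⟨(cycShift n (n - c) i, cycShift n (n - c) j), ?_, ?_⟩
    · exact mem_orderMatching.2 ⟨mem_image_of_mem _ hi, mem_image_of_mem _ hj,
        (rank_unshift_eq_iff hc hI hJ hk hi hj).2 hmod⟩
    · rw [hσ (hI hi), hσ (hJ hj)]

lemma isPM_shiftPairs_orderMatching_unshift (hn : 0 < n) (hc : c ≤ n) (hI : I ⊆ Icc 1 n)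
    (hJ : J ⊆ Icc 1 n) (hk : #I = #J) :
    IsPM I J (shiftPairs n c (orderMatching (unshift n c I) (unshift n c J))) := by
  have hinj : Set.InjOn (cycShift n c) (Icc 1 n : Set ℕ) := (leftInvOn_cycShift_sub hc).injOn
  have := IsPM.image
    (orderMatching_isPM (I := unshift n c I) (J := unshift n c J)
      (by rw [card_unshift hc hI, card_unshift hc hJ, hk]))
    (hinj.mono (coe_subset.2 (unshift_subset hn))) (hinj.mono (coe_subset.2 (unshift_subset hn)))
  rwa [image_unshift hc hI, image_unshift hc hJ] at this

lemma memDyckFamily_shiftPairs_orderMatching (hn : 0 < n) (hI : I ⊆ Icc 1 n) (hJ : J ⊆ Icc 1 n)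
    (hk : #I = #J) (hballot : ∀ x ≤ n, rank J x ≤ rank I x) (c : ℕ) :
    MemDyckFamily n (shiftPairs n c (orderMatching I J)) := by
  have hpm := orderMatching_isPM hk
  refine ⟨c % n, Nat.mod_lt _ hn, orderMatching I J,
    fun p hp => ⟨hI (hpm.1 p hp).1, hJ (hpm.1 p hp).2⟩, ?_,
    ⟨orderMatching_strictMono, orderMatching_weaklyIncreasing ?_⟩, ?_⟩
  · rwa [IsPM.image_fst hpm, IsPM.image_snd hpm]
  · exact fun j hj => hballot j (mem_Icc.1 (hJ hj)).2
  · rw [cycShift_mod]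
    rfl

lemma exists_shift_of_memDyckFamily {M : Finset (ℕ × ℕ)} (hpm : IsPM I J M)
    (hM : MemDyckFamily n M) :
    ∃ c ≤ n, (∀ x, rank (unshift n c J) x ≤ rank (unshift n c I) x) ∧
      M = shiftPairs n c (orderMatching (unshift n c I) (unshift n c J)) := by
  obtain ⟨ℓ, hℓ, M₀, hM₀, hpm₀, ⟨hnc, hwi⟩, rfl⟩ := hM
  change IsPM I J (shiftPairs n ℓ M₀) at hpm
  have hI : unshift n ℓ I = M₀.image Prod.fst := by
    rw [← IsPM.image_fst hpm, image_fst_shiftPairs]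
    refine unshift_image hℓ.le fun a ha => ?_
    obtain ⟨p, hp, rfl⟩ := mem_image.1 ha
    exact (hM₀ p hp).1
  have hJ : unshift n ℓ J = M₀.image Prod.snd := by
    rw [← IsPM.image_snd hpm, image_snd_shiftPairs]
    refine unshift_image hℓ.le fun a ha => ?_
    obtain ⟨p, hp, rfl⟩ := mem_image.1 ha
    exact (hM₀ p hp).2
  refine ⟨ℓ, hℓ.le, ?_, ?_⟩
  · rw [hI, hJ]
    exact IsPM.rank_snd_le_rank_fst hpm₀ hwi
  · rw [hI, hJ, ← IsPM.eq_orderMatching hpm₀ hnc]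
    rfl

end Family

end CyclicMatching

open CyclicMatching

/-- (Supports axiom for `ℳ_n`.) For all `I, J ⊆ [n]` with `|I| = |J|` there is exactly
one perfect matching between `I` and `J` belonging to `ℳ_n`. -/
theorem dyckpaths_stmt4 (n : ℕ) (hn : 0 < n) (I J : Finset ℕ)
    (hI : I ⊆ Finset.Icc 1 n) (hJ : J ⊆ Finset.Icc 1 n) (hcard : I.card = J.card) :
    ∃! M : Finset (ℕ × ℕ), IsPM I J M ∧ MemDyckFamily n M := by
  obtain ⟨c, hc, hmax⟩ := exists_rank_sub_rank_max n I J
  have hballot := (rank_unshift_le_iff hc hI hJ hcard).2 hmax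
  refine ⟨shiftPairs n c (orderMatching (unshift n c I) (unshift n c J)),
    ⟨isPM_shiftPairs_orderMatching_unshift hn hc hI hJ hcard,
      memDyckFamily_shiftPairs_orderMatching hn (unshift_subset hn) (unshift_subset hn)
        (by rw [card_unshift hc hI, card_unshift hc hJ, hcard]) hballot c⟩, ?_⟩
  rintro M ⟨hpm, hM⟩
  obtain ⟨c', hc', hballot', rfl⟩ := exists_shift_of_memDyckFamily hpm hM
  have hmax' := (rank_unshift_le_iff hc' hI hJ hcard).1 fun x _ => hballot' x
  have hc_eq : (rank I c' : ℤ) - rank J c' = rank I c - rank J c := by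
    have := hmax c' hc'
    have := hmax' c hc
    omega
  ext ⟨i, j⟩
  rw [mem_shiftPairs_orderMatching_unshift hc' hI hJ hcard,
    mem_shiftPairs_orderMatching_unshift hc hI hJ hcard, hc_eq]
end

section
/- For every positive integer n, if M ∈ ℳ_n is a perfect matching between I, J ⊆ [n] and M' ⊆ M, then M' (which is a perfect matching between the set of first coordinates and the set of second coordinates of its pairs) also belongs to ℳ_n. -/
/-- (Closure axiom for `ℳ_n`.) Any sub-matching of a matching of `ℳ_n` is again in `ℳ_n`. -/
theorem dyckpaths_stmt5 (n : ℕ) (hn : 0 < n) (I J : Finset ℕ)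
    (hI : I ⊆ Finset.Icc 1 n) (hJ : J ⊆ Finset.Icc 1 n)
    (M : Finset (ℕ × ℕ)) (hM : IsPM I J M) (hmem : MemDyckFamily n M)
    (M' : Finset (ℕ × ℕ)) (hM' : M' ⊆ M) :
    MemDyckFamily n M' := by
  obtain ⟨ℓ, hℓ, M₀, hrange, hpm, hncwi, hMeq⟩ := hmem
  set f : ℕ × ℕ → ℕ × ℕ := fun p => (cycShift n ℓ p.1, cycShift n ℓ p.2) with hf
  refine ⟨ℓ, hℓ, M₀.filter (fun p => f p ∈ M'), ?_, ?_, ?_, ?_⟩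
  · intro p hp; exact hrange p (Finset.mem_filter.mp hp).1
  · refine ⟨fun p hp => ⟨Finset.mem_image_of_mem _ hp, Finset.mem_image_of_mem _ hp⟩,
      ?_, ?_⟩
    · intro i hi
      obtain ⟨p, hp, rfl⟩ := Finset.mem_image.mp hi
      have hp0 : p ∈ M₀ := (Finset.mem_filter.mp hp).1
      refine ⟨p.2, by simpa using hp, fun j hj => ?_⟩
      have hj0 : (p.1, j) ∈ M₀ := (Finset.mem_filter.mp hj).1
      obtain ⟨j0, _, huniq⟩ := hpm.2.1 p.1 (Finset.mem_image_of_mem Prod.fst hp0)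
      rw [huniq j hj0, huniq p.2 (by simpa using hp0)]
    · intro j hj
      obtain ⟨p, hp, rfl⟩ := Finset.mem_image.mp hj
      have hp0 : p ∈ M₀ := (Finset.mem_filter.mp hp).1
      refine ⟨p.1, by simpa using hp, fun i hi => ?_⟩
      have hi0 : (i, p.2) ∈ M₀ := (Finset.mem_filter.mp hi).1
      obtain ⟨i0, _, huniq⟩ := hpm.2.2 p.2 (Finset.mem_image_of_mem Prod.snd hp0)
      rw [huniq i hi0, huniq p.1 (by simpa using hp0)]
  · exact ⟨fun p hp q hq => hncwi.1 p (Finset.mem_filter.mp hp).1 q (Finset.mem_filter.mp hq).1,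
      fun p hp => hncwi.2 p (Finset.mem_filter.mp hp).1⟩
  · ext q
    simp only [Finset.mem_image, Finset.mem_filter]
    constructor
    · intro hq
      have : q ∈ M := hM' hq
      rw [hMeq] at this
      obtain ⟨p, hp, hpq⟩ := Finset.mem_image.mp this
      exact ⟨p, ⟨hp, hpq ▸ hq⟩, hpq⟩
    · rintro ⟨p, ⟨hp, hpm'⟩, rfl⟩
      exact hpm'
end

section
/- For every positive integer n and all subsets I ⊆ [n+1] and J ⊆ [n] with |I| = |J|, there exists exactly one perfect matching between I and J that belongs to the family ℳ^ext_n. -/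
/-- The cyclic shift `σ_ℓ(a) = ((a - 1 + ℓ) mod n) + 1` on `[n] = {1, …, n}`,
extended by fixing `n + 1`. -/
def cycShiftExt (n ℓ a : ℕ) : ℕ := if a = n + 1 then n + 1 else (a - 1 + ℓ) % n + 1

/-- `M` is extended-nc+wi: non-crossing, and weakly increasing away from `n + 1`. -/
def NCWIext (n : ℕ) (M : Finset (ℕ × ℕ)) : Prop :=
  (∀ p ∈ M, ∀ q ∈ M, p.1 < q.1 → p.2 < q.2) ∧
  (∀ p ∈ M, p.1 ≠ n + 1 → p.1 ≤ p.2)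

/-- The family `ℳ^ext_n`: all `ℓ`-shifts (`0 ≤ ℓ < n`) of extended-nc+wi perfect
matchings between subsets of `[n+1]` and of `[n]`. -/
def MemDyckFamilyExt (n : ℕ) (M : Finset (ℕ × ℕ)) : Prop :=
  ∃ ℓ < n, ∃ M₀ : Finset (ℕ × ℕ),
    (∀ p ∈ M₀, p.1 ∈ Finset.Icc 1 (n + 1) ∧ p.2 ∈ Finset.Icc 1 n) ∧
    IsPM (M₀.image Prod.fst) (M₀.image Prod.snd) M₀ ∧
    NCWIext n M₀ ∧
    M = M₀.image (fun p => (cycShiftExt n ℓ p.1, cycShiftExt n ℓ p.2))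



open Finset

section Shift
variable {n : ℕ}

lemma cyc_le (hn : 0 < n) (ℓ a : ℕ) (ha : a ≠ n + 1) : cycShiftExt n ℓ a ≤ n := by
  unfold cycShiftExt
  rw [if_neg ha]
  have := Nat.mod_lt (a - 1 + ℓ) hn
  omega

lemma cyc_one_le (ℓ a : ℕ) : 1 ≤ cycShiftExt n ℓ a := by
  unfold cycShiftExt; split <;> omega

lemma cyc_eq_top_iff (hn : 0 < n) (ℓ a : ℕ) : cycShiftExt n ℓ a = n + 1 ↔ a = n + 1 := by
  constructor
  · intro h
    by_contra hne
    have := cyc_le hn ℓ a hne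
    omega
  · intro h; simp [cycShiftExt, h]

lemma cyc_comp (hn : 0 < n) (a b x : ℕ) :
    cycShiftExt n a (cycShiftExt n b x) = cycShiftExt n (a + b) x := by
  rcases eq_or_ne x (n+1) with hx | hx
  · simp [cycShiftExt, hx]
  · have h1 : cycShiftExt n b x = (x - 1 + b) % n + 1 := by rw [cycShiftExt, if_neg hx]
    have h2 : cycShiftExt n b x ≠ n + 1 := by
      intro h; exact hx ((cyc_eq_top_iff hn b x).mp h)
    rw [cycShiftExt, if_neg h2, h1, cycShiftExt, if_neg hx]
    congr 1
    have : (x - 1 + b) % n + 1 - 1 + a = (x - 1 + b) % n + a := by omega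
    rw [this, Nat.mod_add_mod]
    congr 1
    omega

lemma cyc_id (x : ℕ) (hx : x ∈ Finset.Icc 1 (n + 1)) : cycShiftExt n 0 x = x := by
  simp only [Finset.mem_Icc] at hx
  rcases eq_or_ne x (n+1) with h | h
  · simp [cycShiftExt, h]
  · rw [cycShiftExt, if_neg h, Nat.add_zero, Nat.mod_eq_of_lt (by omega)]
    omega

lemma cyc_mod (ℓ x : ℕ) : cycShiftExt n (ℓ % n) x = cycShiftExt n ℓ x := by
  rcases eq_or_ne x (n+1) with h | h
  · simp [cycShiftExt, h]
  · rw [cycShiftExt, if_neg h, cycShiftExt, if_neg h]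
    simp [Nat.add_mod]

lemma cyc_inv (hn : 0 < n) (ℓ : ℕ) (hℓ : ℓ ≤ n) (x : ℕ) (hx : x ∈ Finset.Icc 1 (n + 1)) :
    cycShiftExt n ℓ (cycShiftExt n (n - ℓ) x) = x := by
  rw [cyc_comp hn]
  have : ℓ + (n - ℓ) = n := by omega
  rw [this, ← cyc_mod, Nat.mod_self, cyc_id x hx]

lemma cyc_inv' (hn : 0 < n) (ℓ : ℕ) (hℓ : ℓ ≤ n) (x : ℕ) (hx : x ∈ Finset.Icc 1 (n + 1)) :
    cycShiftExt n (n - ℓ) (cycShiftExt n ℓ x) = x := by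
  rw [cyc_comp hn]
  have : (n - ℓ) + ℓ = n := by omega
  rw [this, ← cyc_mod, Nat.mod_self, cyc_id x hx]

lemma cyc_injOn (hn : 0 < n) (ℓ : ℕ) (hℓ : ℓ ≤ n) :
    Set.InjOn (cycShiftExt n ℓ) (Finset.Icc 1 (n + 1)) := by
  intro x hx y hy h
  rw [← cyc_inv' hn ℓ hℓ x (by exact_mod_cast hx), ← cyc_inv' hn ℓ hℓ y (by exact_mod_cast hy), h]

lemma cyc_mem (hn : 0 < n) (ℓ x : ℕ) (hx : x ∈ Finset.Icc 1 (n + 1)) :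
    cycShiftExt n ℓ x ∈ Finset.Icc 1 (n + 1) := by
  rcases eq_or_ne x (n+1) with h | h
  · simp [cycShiftExt, h]
  · have := cyc_le hn ℓ x h
    have := cyc_one_le (n := n) ℓ x
    simp only [Finset.mem_Icc]; omega

lemma cyc_mem' (hn : 0 < n) (ℓ x : ℕ) (hx : x ∈ Finset.Icc 1 n) :
    cycShiftExt n ℓ x ∈ Finset.Icc 1 n := by
  simp only [Finset.mem_Icc] at hx
  have hne : x ≠ n + 1 := by omega
  have := cyc_le hn ℓ x hne
  have := cyc_one_le (n := n) ℓ x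
  simp only [Finset.mem_Icc]; omega

lemma cyc_tau (hn : 0 < n) (ℓ a : ℕ) (hℓ : ℓ ≤ n) (ha : a ∈ Finset.Icc 1 n) :
    cycShiftExt n (n - ℓ) a = if ℓ < a then a - ℓ else a + n - ℓ := by
  simp only [Finset.mem_Icc] at ha
  have hne : a ≠ n + 1 := by omega
  rw [cycShiftExt, if_neg hne]
  rcases lt_or_ge ℓ a with h | h
  · have he : a - 1 + (n - ℓ) = n + (a - 1 - ℓ) := by omega
    rw [he, Nat.add_mod_left, Nat.mod_eq_of_lt (by omega), if_pos h]
    omega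
  · rw [Nat.mod_eq_of_lt (by omega), if_neg (by omega)]
    omega

lemma cyc_sigma (hn : 0 < n) (ℓ a : ℕ) (hℓ : ℓ < n) (ha : a ∈ Finset.Icc 1 n) :
    cycShiftExt n ℓ a = if a + ℓ ≤ n then a + ℓ else a + ℓ - n := by
  simp only [Finset.mem_Icc] at ha
  have hne : a ≠ n + 1 := by omega
  rw [cycShiftExt, if_neg hne]
  rcases le_or_gt (a + ℓ) n with h | h
  · rw [Nat.mod_eq_of_lt (by omega), if_pos h]; omega
  · have he : a - 1 + ℓ = n + (a - 1 + ℓ - n) := by omega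
    rw [he, Nat.add_mod_left, Nat.mod_eq_of_lt (by omega), if_neg (by omega)]
    omega

end Shift

section OM

/-- the order matching between `A` and `B` -/
noncomputable def om (A B : Finset ℕ) (h : B.card = A.card) : Finset (ℕ × ℕ) :=
  Finset.univ.image fun r : Fin A.card => (A.orderEmbOfFin rfl r, B.orderEmbOfFin h r)

lemma mem_om {A B : Finset ℕ} {h : B.card = A.card} {p : ℕ × ℕ} :
    p ∈ om A B h ↔ ∃ r, A.orderEmbOfFin rfl r = p.1 ∧ B.orderEmbOfFin h r = p.2 := by
  simp only [om, Finset.mem_image, Finset.mem_univ, true_and, Prod.ext_iff]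

lemma om_fst {A B : Finset ℕ} (h : B.card = A.card) : (om A B h).image Prod.fst = A := by
  ext a
  simp only [Finset.mem_image]
  constructor
  · rintro ⟨p, hp, rfl⟩
    obtain ⟨r, hr, -⟩ := mem_om.mp hp
    rw [← hr]; exact Finset.orderEmbOfFin_mem _ _ _
  · intro ha
    have : a ∈ Set.range (A.orderEmbOfFin rfl) := by
      rw [Finset.range_orderEmbOfFin]; exact_mod_cast ha
    obtain ⟨r, hr⟩ := this
    exact ⟨(a, B.orderEmbOfFin h r), mem_om.mpr ⟨r, hr, rfl⟩, rfl⟩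

lemma om_snd {A B : Finset ℕ} (h : B.card = A.card) : (om A B h).image Prod.snd = B := by
  ext b
  simp only [Finset.mem_image]
  constructor
  · rintro ⟨p, hp, rfl⟩
    obtain ⟨r, -, hr⟩ := mem_om.mp hp
    rw [← hr]; exact Finset.orderEmbOfFin_mem _ _ _
  · intro hb
    have : b ∈ Set.range (B.orderEmbOfFin h) := by
      rw [Finset.range_orderEmbOfFin]; exact_mod_cast hb
    obtain ⟨r, hr⟩ := this
    exact ⟨(A.orderEmbOfFin rfl r, b), mem_om.mpr ⟨r, rfl, hr⟩, rfl⟩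

lemma om_pm {A B : Finset ℕ} (h : B.card = A.card) : IsPM A B (om A B h) := by
  refine ⟨?_, ?_, ?_⟩
  · intro p hp
    obtain ⟨r, h1, h2⟩ := mem_om.mp hp
    exact ⟨h1 ▸ Finset.orderEmbOfFin_mem _ _ _, h2 ▸ Finset.orderEmbOfFin_mem _ _ _⟩
  · intro i hi
    have : i ∈ Set.range (A.orderEmbOfFin rfl) := by
      rw [Finset.range_orderEmbOfFin]; exact_mod_cast hi
    obtain ⟨r, hr⟩ := this
    refine ⟨B.orderEmbOfFin h r, mem_om.mpr ⟨r, hr, rfl⟩, ?_⟩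
    intro j hj
    obtain ⟨r', h1, h2⟩ := mem_om.mp hj
    simp only at h1 h2
    have : r' = r := (A.orderEmbOfFin rfl).injective (by rw [h1, hr])
    rw [← h2, this]
  · intro j hj
    have : j ∈ Set.range (B.orderEmbOfFin h) := by
      rw [Finset.range_orderEmbOfFin]; exact_mod_cast hj
    obtain ⟨r, hr⟩ := this
    refine ⟨A.orderEmbOfFin rfl r, mem_om.mpr ⟨r, rfl, hr⟩, ?_⟩
    intro i hi
    obtain ⟨r', h1, h2⟩ := mem_om.mp hi
    simp only at h1 h2
    have : r' = r := (B.orderEmbOfFin h).injective (by rw [h2, hr])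
    rw [← h1, this]

lemma om_nc {A B : Finset ℕ} (h : B.card = A.card) :
    ∀ p ∈ om A B h, ∀ q ∈ om A B h, p.1 < q.1 → p.2 < q.2 := by
  intro p hp q hq hlt
  obtain ⟨r, h1, h2⟩ := mem_om.mp hp
  obtain ⟨s, h3, h4⟩ := mem_om.mp hq
  rw [← h1, ← h3] at hlt
  have hrs : r < s := (A.orderEmbOfFin rfl).strictMono.lt_iff_lt.mp hlt
  rw [← h2, ← h4]
  exact (B.orderEmbOfFin h).strictMono hrs

end OM

section Unique

lemma pm_erase {A B : Finset ℕ} {M : Finset (ℕ × ℕ)} (hpm : IsPM A B M) {a b : ℕ}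
    (hab : (a, b) ∈ M) :
    IsPM (A.erase a) (B.erase b) (M.erase (a, b)) := by
  obtain ⟨hsub, hA, hB⟩ := hpm
  have ha : a ∈ A := (hsub _ hab).1
  have hb : b ∈ B := (hsub _ hab).2
  refine ⟨?_, ?_, ?_⟩
  · intro p hp
    have hpM := Finset.mem_of_mem_erase hp
    have hpne := Finset.ne_of_mem_erase hp
    obtain ⟨h1, h2⟩ := hsub _ hpM
    constructor
    · refine Finset.mem_erase.mpr ⟨?_, h1⟩
      intro he
      have : (p.1, p.2) ∈ M := by rwa [Prod.mk.eta]
      rw [he] at this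
      have := (hA a ha).unique this hab
      exact hpne (by rw [← Prod.mk.eta (p := p), he, this])
    · refine Finset.mem_erase.mpr ⟨?_, h2⟩
      intro he
      have : (p.1, p.2) ∈ M := by rwa [Prod.mk.eta]
      rw [he] at this
      have := (hB b hb).unique this hab
      exact hpne (by rw [← Prod.mk.eta (p := p), he, this])
  · intro i hi
    have hiA := Finset.mem_of_mem_erase hi
    have hine := Finset.ne_of_mem_erase hi
    obtain ⟨j, hj, hju⟩ := hA i hiA
    refine ⟨j, Finset.mem_erase.mpr ⟨by simp [hine], hj⟩, ?_⟩
    intro y hy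
    exact hju y (Finset.mem_of_mem_erase hy)
  · intro j hj
    have hjB := Finset.mem_of_mem_erase hj
    have hjne := Finset.ne_of_mem_erase hj
    obtain ⟨i, hi, hiu⟩ := hB j hjB
    refine ⟨i, Finset.mem_erase.mpr ⟨by simp [hjne], hi⟩, ?_⟩
    intro y hy
    exact hiu y (Finset.mem_of_mem_erase hy)

lemma max_pair_mem {A B : Finset ℕ} {M : Finset (ℕ × ℕ)} (hpm : IsPM A B M)
    (hAne : A.Nonempty) (hBne : B.Nonempty)
    (hnc : ∀ p ∈ M, ∀ q ∈ M, p.1 < q.1 → p.2 < q.2) :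
    (A.max' hAne, B.max' hBne) ∈ M := by
  obtain ⟨hsub, hA, hB⟩ := hpm
  obtain ⟨b, hb, -⟩ := hA _ (A.max'_mem hAne)
  obtain ⟨a, ha, -⟩ := hB _ (B.max'_mem hBne)
  rcases eq_or_ne b (B.max' hBne) with rfl | hbne
  · exact hb
  · exfalso
    have hbB : b ∈ B := (hsub _ hb).2
    have haA : a ∈ A := (hsub _ ha).1
    have hblt : b < B.max' hBne := lt_of_le_of_ne (B.le_max' b hbB) hbne
    have hane : a ≠ A.max' hAne := by
      intro he
      rw [he] at ha
      exact hbne ((hA _ (A.max'_mem hAne)).unique hb ha)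
    have halt : a < A.max' hAne := lt_of_le_of_ne (A.le_max' a haA) hane
    have := hnc _ ha _ hb halt
    omega

lemma ncpm_unique : ∀ (N : ℕ) (A B : Finset ℕ) (M₁ M₂ : Finset (ℕ × ℕ)),
    A.card ≤ N → IsPM A B M₁ → IsPM A B M₂ →
    (∀ p ∈ M₁, ∀ q ∈ M₁, p.1 < q.1 → p.2 < q.2) →
    (∀ p ∈ M₂, ∀ q ∈ M₂, p.1 < q.1 → p.2 < q.2) → M₁ = M₂ := by
  intro N
  induction N with
  | zero =>
    intro A B M₁ M₂ hcard h1 h2 _ _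
    have hA : A = ∅ := Finset.card_eq_zero.mp (Nat.le_zero.mp hcard)
    subst hA
    have e1 : M₁ = ∅ := by
      rw [Finset.eq_empty_iff_forall_notMem]
      intro p hp
      exact absurd (h1.1 p hp).1 (Finset.notMem_empty _)
    have e2 : M₂ = ∅ := by
      rw [Finset.eq_empty_iff_forall_notMem]
      intro p hp
      exact absurd (h2.1 p hp).1 (Finset.notMem_empty _)
    rw [e1, e2]
  | succ N ih =>
    intro A B M₁ M₂ hcard h1 h2 hnc1 hnc2
    rcases Finset.eq_empty_or_nonempty A with rfl | hAne
    · have e1 : M₁ = ∅ := by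
        rw [Finset.eq_empty_iff_forall_notMem]
        intro p hp
        exact absurd (h1.1 p hp).1 (Finset.notMem_empty _)
      have e2 : M₂ = ∅ := by
        rw [Finset.eq_empty_iff_forall_notMem]
        intro p hp
        exact absurd (h2.1 p hp).1 (Finset.notMem_empty _)
      rw [e1, e2]
    · have hBne : B.Nonempty := by
        obtain ⟨a, ha⟩ := hAne
        obtain ⟨j, hj, -⟩ := h1.2.1 a ha
        exact ⟨j, (h1.1 _ hj).2⟩
      set a := A.max' hAne
      set b := B.max' hBne
      have hm1 : (a, b) ∈ M₁ := max_pair_mem h1 hAne hBne hnc1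
      have hm2 : (a, b) ∈ M₂ := max_pair_mem h2 hAne hBne hnc2
      have heq : M₁.erase (a, b) = M₂.erase (a, b) := by
        apply ih (A.erase a) (B.erase b)
        · rw [Finset.card_erase_of_mem (A.max'_mem hAne)]
          omega
        · exact pm_erase h1 hm1
        · exact pm_erase h2 hm2
        · intro p hp q hq; exact hnc1 p (Finset.mem_of_mem_erase hp) q (Finset.mem_of_mem_erase hq)
        · intro p hp q hq; exact hnc2 p (Finset.mem_of_mem_erase hp) q (Finset.mem_of_mem_erase hq)
      rw [← Finset.insert_erase hm1, ← Finset.insert_erase hm2, heq]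

lemma pm_supports {I J : Finset ℕ} {M : Finset (ℕ × ℕ)} (h : IsPM I J M) :
    M.image Prod.fst = I ∧ M.image Prod.snd = J := by
  obtain ⟨hsub, hA, hB⟩ := h
  constructor
  · ext a
    simp only [Finset.mem_image]
    constructor
    · rintro ⟨p, hp, rfl⟩; exact (hsub p hp).1
    · intro ha
      obtain ⟨j, hj, -⟩ := hA a ha
      exact ⟨(a, j), hj, rfl⟩
  · ext b
    simp only [Finset.mem_image]
    constructor
    · rintro ⟨p, hp, rfl⟩; exact (hsub p hp).2
    · intro hb
      obtain ⟨i, hi, -⟩ := hB b hb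
      exact ⟨(i, b), hi, rfl⟩

lemma pm_image {A B : Finset ℕ} {M : Finset (ℕ × ℕ)} (φ : ℕ → ℕ) (S : Set ℕ)
    (hinj : Set.InjOn φ S) (hA : ↑A ⊆ S) (hB : ↑B ⊆ S) (h : IsPM A B M) :
    IsPM (A.image φ) (B.image φ) (M.image fun p => (φ p.1, φ p.2)) := by
  obtain ⟨hsub, hl, hr⟩ := h
  refine ⟨?_, ?_, ?_⟩
  · intro p hp
    obtain ⟨q, hq, rfl⟩ := Finset.mem_image.mp hp
    exact ⟨Finset.mem_image_of_mem _ (hsub q hq).1, Finset.mem_image_of_mem _ (hsub q hq).2⟩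
  · intro i hi
    obtain ⟨a, ha, rfl⟩ := Finset.mem_image.mp hi
    obtain ⟨j, hj, hju⟩ := hl a ha
    refine ⟨φ j, Finset.mem_image.mpr ⟨(a, j), hj, rfl⟩, ?_⟩
    intro y hy
    obtain ⟨q, hq, hqe⟩ := Finset.mem_image.mp hy
    have h1 : φ q.1 = φ a := congrArg Prod.fst hqe
    have h2 : φ q.2 = y := congrArg Prod.snd hqe
    have hq1 : q.1 = a := hinj (hA (hsub q hq).1) (hA ha) h1
    have : q.2 = j := by
      apply hju
      rw [← hq1, Prod.mk.eta]
      exact hq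
    rw [← h2, this]
  · intro j hj
    obtain ⟨b, hb, rfl⟩ := Finset.mem_image.mp hj
    obtain ⟨i, hi, hiu⟩ := hr b hb
    refine ⟨φ i, Finset.mem_image.mpr ⟨(i, b), hi, rfl⟩, ?_⟩
    intro y hy
    obtain ⟨q, hq, hqe⟩ := Finset.mem_image.mp hy
    have h1 : φ q.1 = y := congrArg Prod.fst hqe
    have h2 : φ q.2 = φ b := congrArg Prod.snd hqe
    have hq2 : q.2 = b := hinj (hB (hsub q hq).2) (hB hb) h2
    have : q.1 = i := by
      apply hiu
      rw [← hq2, Prod.mk.eta]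
      exact hq
    rw [← h1, this]

end Unique

section Bridge

lemma count_eq {B : Finset ℕ} {k : ℕ} (h : B.card = k) (hB : ∀ b ∈ B, 1 ≤ b) (t : ℕ) :
    (B ∩ Finset.Icc 1 t).card
      = (Finset.univ.filter fun r : Fin k => B.orderEmbOfFin h r ≤ t).card := by
  have himg : B ∩ Finset.Icc 1 t
      = (Finset.univ.filter fun r : Fin k => B.orderEmbOfFin h r ≤ t).image
          (B.orderEmbOfFin h) := by
    ext x
    simp only [Finset.mem_inter, Finset.mem_Icc, Finset.mem_image, Finset.mem_filter,
      Finset.mem_univ, true_and]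
    constructor
    · rintro ⟨hxB, -, hxt⟩
      have : x ∈ Set.range (B.orderEmbOfFin h) := by
        rw [Finset.range_orderEmbOfFin]; exact_mod_cast hxB
      obtain ⟨r, hr⟩ := this
      exact ⟨r, by rw [hr]; exact hxt, hr⟩
    · rintro ⟨r, hrt, rfl⟩
      exact ⟨Finset.orderEmbOfFin_mem _ _ _, hB _ (Finset.orderEmbOfFin_mem _ _ _), hrt⟩
  rw [himg, Finset.card_image_of_injective _ (B.orderEmbOfFin h).injective]

lemma top_emb {n : ℕ} {A : Finset ℕ} (hA : A ⊆ Finset.Icc 1 (n + 1)) (htop : n + 1 ∈ A)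
    {k : ℕ} (h : A.card = k) (hk : 0 < k) :
    A.orderEmbOfFin h ⟨k - 1, by omega⟩ = n + 1 := by
  have : (n : ℕ) + 1 ∈ Set.range (A.orderEmbOfFin h) := by
    rw [Finset.range_orderEmbOfFin]; exact_mod_cast htop
  obtain ⟨r, hr⟩ := this
  have h1 : A.orderEmbOfFin h r ≤ A.orderEmbOfFin h ⟨k - 1, by omega⟩ :=
    (A.orderEmbOfFin h).monotone (by simp [Fin.le_def]; omega)
  have h2 : A.orderEmbOfFin h ⟨k - 1, by omega⟩ ≤ n + 1 := by
    have := hA (Finset.orderEmbOfFin_mem A h ⟨k - 1, by omega⟩)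
    simp only [Finset.mem_Icc] at this
    exact this.2
  omega

set_option maxHeartbeats 1000000 in
lemma bridge1 {n : ℕ} (hn : 0 < n) {A B : Finset ℕ} (hA : A ⊆ Finset.Icc 1 (n + 1))
    (hB : B ⊆ Finset.Icc 1 n) (h : B.card = A.card)
    (hpre : ∀ t, (B ∩ Finset.Icc 1 t).card ≤ (A ∩ Finset.Icc 1 t).card +
      (if n + 1 ∈ A ∧ B ⊆ Finset.Icc 1 t then 1 else 0)) :
    NCWIext n (om A B h) := by
  refine ⟨om_nc h, ?_⟩
  intro p hp hne
  obtain ⟨r, h1, h2⟩ := mem_om.mp hp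
  by_contra hlt
  push_neg at hlt
  set t := p.2 with ht
  have hBone : ∀ b ∈ B, 1 ≤ b := fun b hb => (Finset.mem_Icc.mp (hB hb)).1
  have hAone : ∀ a ∈ A, 1 ≤ a := fun a ha => (Finset.mem_Icc.mp (hA ha)).1
  have cB : r.1 + 1 ≤ (B ∩ Finset.Icc 1 t).card := by
    rw [count_eq h hBone t]
    have hsub : Finset.Iic r ⊆ Finset.univ.filter fun s : Fin _ => B.orderEmbOfFin h s ≤ t := by
      intro s hs
      simp only [Finset.mem_Iic] at hs
      simp only [Finset.mem_filter, Finset.mem_univ, true_and]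
      calc B.orderEmbOfFin h s ≤ B.orderEmbOfFin h r := (B.orderEmbOfFin h).monotone hs
        _ = t := h2
    calc r.1 + 1 = (Finset.Iic r).card := (Fin.card_Iic r).symm
      _ ≤ _ := Finset.card_le_card hsub
  have cA : (A ∩ Finset.Icc 1 t).card ≤ r.1 := by
    rw [count_eq rfl hAone t]
    have hsub : (Finset.univ.filter fun s : Fin _ => A.orderEmbOfFin rfl s ≤ t)
        ⊆ Finset.Iio r := by
      intro s hs
      simp only [Finset.mem_filter, Finset.mem_univ, true_and] at hs
      simp only [Finset.mem_Iio]
      by_contra hge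
      push_neg at hge
      have : A.orderEmbOfFin rfl r ≤ A.orderEmbOfFin rfl s := (A.orderEmbOfFin rfl).monotone hge
      rw [h1] at this
      omega
    calc _ ≤ (Finset.Iio r).card := Finset.card_le_card hsub
      _ = r.1 := Fin.card_Iio r
  have hiff : ¬(n + 1 ∈ A ∧ B ⊆ Finset.Icc 1 t) := by
    rintro ⟨htop, hBt⟩
    have hk : 0 < A.card := r.pos
    obtain ⟨rt, hrt⟩ : ∃ rt : Fin A.card, rt.1 = A.card - 1 := ⟨⟨A.card - 1, by omega⟩, rfl⟩
    have hlast : A.orderEmbOfFin rfl rt = n + 1 := by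
      have h0 := top_emb hA htop rfl hk
      have : (⟨A.card - 1, by omega⟩ : Fin A.card) = rt := Fin.ext (by simp [hrt])
      rwa [this] at h0
    have hrlt : r < rt := by
      rw [Fin.lt_def]
      have hrle : r.1 ≤ A.card - 1 := by omega
      rcases eq_or_lt_of_le (hrt ▸ hrle) with he | hl
      · exfalso
        apply hne
        rw [← h1]
        have hre : r = rt := Fin.ext he
        rw [hre, hlast]
      · exact hl
    have hbl : B.orderEmbOfFin h r < B.orderEmbOfFin h rt :=
      (B.orderEmbOfFin h).strictMono hrlt
    have hmem : B.orderEmbOfFin h rt ∈ B := Finset.orderEmbOfFin_mem _ _ _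
    have hle := (Finset.mem_Icc.mp (hBt hmem)).2
    rw [h2] at hbl
    omega
  have := hpre t
  rw [if_neg hiff] at this
  omega

lemma bridge2 {n : ℕ} {A B : Finset ℕ} (hA : A ⊆ Finset.Icc 1 (n + 1))
    (hB : B ⊆ Finset.Icc 1 n) (h : B.card = A.card)
    (hwi : ∀ p ∈ om A B h, p.1 ≠ n + 1 → p.1 ≤ p.2) (t : ℕ) :
    (B ∩ Finset.Icc 1 t).card ≤ (A ∩ Finset.Icc 1 t).card +
      (if n + 1 ∈ A ∧ B ⊆ Finset.Icc 1 t then 1 else 0) := by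
  have hBone : ∀ b ∈ B, 1 ≤ b := fun b hb => (Finset.mem_Icc.mp (hB hb)).1
  have hAone : ∀ a ∈ A, 1 ≤ a := fun a ha => (Finset.mem_Icc.mp (hA ha)).1
  rw [count_eq h hBone t, count_eq rfl hAone t]
  have key : ∀ s : Fin A.card, B.orderEmbOfFin h s ≤ t →
      A.orderEmbOfFin rfl s ≤ t ∨
        (n + 1 ∈ A ∧ B ⊆ Finset.Icc 1 t ∧ A.orderEmbOfFin rfl s = n + 1) := by
    intro s hs
    rcases eq_or_ne (A.orderEmbOfFin rfl s) (n + 1) with he | hne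
    · right
      refine ⟨he ▸ Finset.orderEmbOfFin_mem _ _ _, ?_, he⟩
      -- s must be the largest index, so embB s = max of B
      intro b hb
      have : b ∈ Set.range (B.orderEmbOfFin h) := by
        rw [Finset.range_orderEmbOfFin]; exact_mod_cast hb
      obtain ⟨s', rfl⟩ := this
      simp only [Finset.mem_Icc]
      refine ⟨hBone _ (Finset.orderEmbOfFin_mem _ _ _), ?_⟩
      have hsle : s' ≤ s := by
        by_contra hgt
        push_neg at hgt
        have h1 : A.orderEmbOfFin rfl s < A.orderEmbOfFin rfl s' :=
          (A.orderEmbOfFin rfl).strictMono hgt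
        have h2 := Finset.mem_Icc.mp (hA (Finset.orderEmbOfFin_mem A rfl s'))
        omega
      calc B.orderEmbOfFin h s' ≤ B.orderEmbOfFin h s := (B.orderEmbOfFin h).monotone hsle
        _ ≤ t := hs
    · left
      have := hwi (A.orderEmbOfFin rfl s, B.orderEmbOfFin h s) (mem_om.mpr ⟨s, rfl, rfl⟩) hne
      simp only at this
      omega
  split_ifs with hif
  · have hsub : (Finset.univ.filter fun s : Fin A.card => B.orderEmbOfFin h s ≤ t)
        ⊆ (Finset.univ.filter fun s : Fin A.card => A.orderEmbOfFin rfl s ≤ t) ∪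
          (Finset.univ.filter fun s : Fin A.card => A.orderEmbOfFin rfl s = n + 1) := by
      intro s hs
      simp only [Finset.mem_filter, Finset.mem_univ, true_and] at hs
      rcases key s hs with hc | hc
      · exact Finset.mem_union_left _ (by simp [hc])
      · exact Finset.mem_union_right _ (by simp [hc.2.2])
    have hone : (Finset.univ.filter fun s : Fin A.card =>
        A.orderEmbOfFin rfl s = n + 1).card ≤ 1 := by
      apply Finset.card_le_one.mpr
      intro a ha b hb
      simp only [Finset.mem_filter, Finset.mem_univ, true_and] at ha hb
      exact (A.orderEmbOfFin rfl).injective (by rw [ha, hb])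
    calc _ ≤ _ := Finset.card_le_card hsub
      _ ≤ _ + _ := Finset.card_union_le _ _
      _ ≤ _ + 1 := by omega
  · have hsub : (Finset.univ.filter fun s : Fin A.card => B.orderEmbOfFin h s ≤ t)
        ⊆ (Finset.univ.filter fun s : Fin A.card => A.orderEmbOfFin rfl s ≤ t) := by
      intro s hs
      simp only [Finset.mem_filter, Finset.mem_univ, true_and] at hs ⊢
      rcases key s hs with hc | hc
      · exact hc
      · exact absurd ⟨hc.1, hc.2.1⟩ hif
    simpa using Finset.card_le_card hsub

end Bridge

section Counting
variable {n : ℕ}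

lemma count_split (X : Finset ℕ) {u v : ℕ} (h : u ≤ v) :
    (X ∩ Finset.Icc 1 v).card = (X ∩ Finset.Icc 1 u).card + (X ∩ Finset.Icc (u+1) v).card := by
  rw [← Finset.card_union_of_disjoint (by
    rw [Finset.disjoint_left]
    intro a ha hb
    simp only [Finset.mem_inter, Finset.mem_Icc] at ha hb
    omega)]
  congr 1
  ext a
  simp only [Finset.mem_union, Finset.mem_inter, Finset.mem_Icc]
  constructor
  · rintro ⟨ha, h1, h2⟩
    rcases le_or_gt a u with hc | hc
    · exact Or.inl ⟨ha, h1, hc⟩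
    · exact Or.inr ⟨ha, by omega, h2⟩
  · rintro (⟨ha, h1, h2⟩ | ⟨ha, h1, h2⟩) <;> exact ⟨ha, by omega, by omega⟩

lemma count_mono (X : Finset ℕ) {u v : ℕ} (h : u ≤ v) :
    (X ∩ Finset.Icc 1 u).card ≤ (X ∩ Finset.Icc 1 v).card := by
  apply Finset.card_le_card
  intro a ha
  simp only [Finset.mem_inter, Finset.mem_Icc] at ha ⊢
  exact ⟨ha.1, ha.2.1, by omega⟩

lemma cyc_count (hn : 0 < n) {X : Finset ℕ} (hX : X ⊆ Finset.Icc 1 (n + 1)) {ℓ t : ℕ}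
    (hℓ : ℓ ≤ n) (ht : t ≤ n) :
    ((X.image (cycShiftExt n (n - ℓ))) ∩ Finset.Icc 1 t).card
      = (X ∩ Finset.Icc (ℓ + 1) (min (ℓ + t) n)).card + (X ∩ Finset.Icc 1 (t + ℓ - n)).card := by
  have himg : (X.image (cycShiftExt n (n - ℓ))) ∩ Finset.Icc 1 t
      = (X.filter fun a => cycShiftExt n (n - ℓ) a ≤ t).image (cycShiftExt n (n - ℓ)) := by
    ext x
    simp only [Finset.mem_inter, Finset.mem_image, Finset.mem_filter, Finset.mem_Icc]
    constructor
    · rintro ⟨⟨a, ha, rfl⟩, -, h2⟩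
      exact ⟨a, ⟨ha, h2⟩, rfl⟩
    · rintro ⟨a, ⟨ha, h2⟩, rfl⟩
      exact ⟨⟨a, ha, rfl⟩, cyc_one_le _ _, h2⟩
  rw [himg, Finset.card_image_of_injOn (Set.InjOn.mono (fun a ha => by
    simp only [Finset.coe_filter, Set.mem_setOf_eq] at ha
    exact_mod_cast hX ha.1) (cyc_injOn hn (n - ℓ) (by omega)))]
  rw [← Finset.card_union_of_disjoint (by
    rw [Finset.disjoint_left]
    intro a ha hb
    simp only [Finset.mem_inter, Finset.mem_Icc] at ha hb
    omega)]
  congr 1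
  ext a
  simp only [Finset.mem_filter, Finset.mem_union, Finset.mem_inter, Finset.mem_Icc]
  constructor
  · rintro ⟨ha, hle⟩
    have haI := Finset.mem_Icc.mp (hX ha)
    rcases eq_or_ne a (n + 1) with rfl | hane
    · exfalso
      rw [(cyc_eq_top_iff hn _ _).mpr rfl] at hle
      omega
    · have hc := cyc_tau hn ℓ a hℓ (Finset.mem_Icc.mpr (by omega))
      rw [hc] at hle
      split_ifs at hle with hcase
      · left; exact ⟨ha, by omega, by omega⟩
      · right; exact ⟨ha, by omega, by omega⟩
  · rintro (⟨ha, h1, h2⟩ | ⟨ha, h1, h2⟩)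
    · have hc := cyc_tau hn ℓ a hℓ (Finset.mem_Icc.mpr (by omega))
      refine ⟨ha, ?_⟩
      rw [hc, if_pos (by omega)]
      omega
    · have haI := Finset.mem_Icc.mp (hX ha)
      have hc := cyc_tau hn ℓ a hℓ (Finset.mem_Icc.mpr (by omega))
      refine ⟨ha, ?_⟩
      rw [hc]
      split_ifs <;> omega

end Counting

section GoodCut
variable {n : ℕ}

lemma image_top_iff (hn : 0 < n) {I : Finset ℕ} (ℓ : ℕ) :
    n + 1 ∈ I.image (cycShiftExt n ℓ) ↔ n + 1 ∈ I := by
  constructor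
  · intro h
    obtain ⟨a, ha, hae⟩ := Finset.mem_image.mp h
    rwa [← (cyc_eq_top_iff hn ℓ a).mp hae]
  · intro h
    exact Finset.mem_image.mpr ⟨n + 1, h, by simp [cycShiftExt]⟩

lemma card_image_cyc (hn : 0 < n) {X : Finset ℕ} (hX : X ⊆ Finset.Icc 1 (n + 1)) (ℓ : ℕ)
    (hℓ : ℓ ≤ n) : (X.image (cycShiftExt n ℓ)).card = X.card :=
  Finset.card_image_of_injOn ((cyc_injOn hn ℓ hℓ).mono (fun a ha => by exact_mod_cast hX ha))

lemma inter_Icc_top {n : ℕ} {A : Finset ℕ} (hA : A ⊆ Finset.Icc 1 (n + 1)) :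
    (n + 1 ∈ A → A ∩ Finset.Icc 1 n = A.erase (n + 1)) ∧
    (n + 1 ∉ A → A ∩ Finset.Icc 1 n = A) := by
  constructor
  · intro htop
    ext a
    simp only [Finset.mem_inter, Finset.mem_Icc, Finset.mem_erase]
    constructor
    · rintro ⟨ha, h1, h2⟩; exact ⟨by omega, ha⟩
    · rintro ⟨hne, ha⟩
      have := Finset.mem_Icc.mp (hA ha)
      exact ⟨ha, by omega, by omega⟩
  · intro htop
    ext a
    simp only [Finset.mem_inter, Finset.mem_Icc]
    constructor
    · rintro ⟨ha, -, -⟩; exact ha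
    · intro ha
      have := Finset.mem_Icc.mp (hA ha)
      have : a ≠ n + 1 := fun he => htop (he ▸ ha)
      have := Finset.mem_Icc.mp (hA ha)
      exact ⟨ha, by omega, by omega⟩

lemma good_cut (hn : 0 < n) {I J : Finset ℕ} (hI : I ⊆ Finset.Icc 1 (n + 1))
    (hJ : J ⊆ Finset.Icc 1 n) (hcard : I.card = J.card) :
    ∃ ℓ < n, ∀ t,
      ((J.image (cycShiftExt n (n - ℓ))) ∩ Finset.Icc 1 t).card
        ≤ ((I.image (cycShiftExt n (n - ℓ))) ∩ Finset.Icc 1 t).card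
          + (if n + 1 ∈ I.image (cycShiftExt n (n - ℓ)) ∧
               J.image (cycShiftExt n (n - ℓ)) ⊆ Finset.Icc 1 t then 1 else 0) := by
  have hJ' : J ⊆ Finset.Icc 1 (n + 1) := fun a ha => by
    have := Finset.mem_Icc.mp (hJ ha); simp only [Finset.mem_Icc]; omega
  -- reduction to t < n
  have main : ∀ ℓ, ℓ < n →
      (∀ t, t < n → ((J.image (cycShiftExt n (n - ℓ))) ∩ Finset.Icc 1 t).card
          ≤ ((I.image (cycShiftExt n (n - ℓ))) ∩ Finset.Icc 1 t).card) →
      ∀ t, ((J.image (cycShiftExt n (n - ℓ))) ∩ Finset.Icc 1 t).card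
        ≤ ((I.image (cycShiftExt n (n - ℓ))) ∩ Finset.Icc 1 t).card
          + (if n + 1 ∈ I.image (cycShiftExt n (n - ℓ)) ∧
               J.image (cycShiftExt n (n - ℓ)) ⊆ Finset.Icc 1 t then 1 else 0) := by
    intro ℓ hℓ hsmall t
    set A := I.image (cycShiftExt n (n - ℓ)) with hA
    set B := J.image (cycShiftExt n (n - ℓ)) with hB
    have hAsub : A ⊆ Finset.Icc 1 (n + 1) := by
      intro b hb
      obtain ⟨a, ha, rfl⟩ := Finset.mem_image.mp hb
      exact cyc_mem hn _ a (hI ha)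
    have hBsub : B ⊆ Finset.Icc 1 n := by
      intro b hb
      obtain ⟨a, ha, rfl⟩ := Finset.mem_image.mp hb
      exact cyc_mem' hn _ a (hJ ha)
    rcases lt_or_ge t n with ht | ht
    · exact le_trans (hsmall t ht) (by omega)
    · have hBt : B ∩ Finset.Icc 1 t = B := by
        apply Finset.inter_eq_left.mpr
        intro a ha
        have := Finset.mem_Icc.mp (hBsub ha)
        simp only [Finset.mem_Icc]; omega
      rcases eq_or_lt_of_le ht with heq | ht'
      · -- t = n
        rw [← heq] at hBt ⊢
        by_cases htop : n + 1 ∈ A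
        · have hAe : A ∩ Finset.Icc 1 n = A.erase (n + 1) := (inter_Icc_top hAsub).1 htop
          rw [hAe, hBt, Finset.card_erase_of_mem htop, if_pos ⟨htop, hBsub⟩]
          have h1 : 1 ≤ A.card := Finset.card_pos.mpr ⟨_, htop⟩
          have h2 : B.card ≤ A.card := by
            rw [card_image_cyc hn hI _ (by omega), card_image_cyc hn hJ' _ (by omega)]
            omega
          omega
        · have hAe : A ∩ Finset.Icc 1 n = A := (inter_Icc_top hAsub).2 htop
          rw [hAe, hBt]
          have h2 : B.card ≤ A.card := by
            rw [card_image_cyc hn hI _ (by omega), card_image_cyc hn hJ' _ (by omega)]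
            omega
          omega
      · -- t ≥ n+1
        have hAt : A ∩ Finset.Icc 1 t = A := by
          apply Finset.inter_eq_left.mpr
          intro a ha
          have := Finset.mem_Icc.mp (hAsub ha)
          simp only [Finset.mem_Icc]; omega
        rw [hAt, hBt]
        have h2 : B.card ≤ A.card := by
          rw [card_image_cyc hn hI _ (by omega), card_image_cyc hn hJ' _ (by omega)]
          omega
        omega
  have hF0 : ∀ X : Finset ℕ, X ∩ Finset.Icc 1 0 = ∅ := by
    intro X
    rw [Finset.Icc_eq_empty (by omega), Finset.inter_empty]
  have hFJn : J ∩ Finset.Icc 1 n = J := Finset.inter_eq_left.mpr hJ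
  by_cases hE : n + 1 ∈ I
  · -- case n+1 ∈ I
    have hFIn : I ∩ Finset.Icc 1 n = I.erase (n + 1) := (inter_Icc_top hI).1 hE
    have hIk : 1 ≤ I.card := Finset.card_pos.mpr ⟨_, hE⟩
    have hJne : J.Nonempty := Finset.card_pos.mp (by omega)
    obtain ⟨q0, hq0J, hq0min⟩ := Finset.exists_min_image J
      (fun q => ((I ∩ Finset.Icc 1 q).card : ℤ) - ((J ∩ Finset.Icc 1 q).card : ℤ)) hJne
    set μ : ℤ := ((I ∩ Finset.Icc 1 q0).card : ℤ) - ((J ∩ Finset.Icc 1 q0).card : ℤ) with hμ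
    obtain ⟨p, hpF, hpmin⟩ := Finset.exists_min_image
      (J.filter fun q => ((I ∩ Finset.Icc 1 q).card : ℤ) - ((J ∩ Finset.Icc 1 q).card : ℤ) = μ)
      id ⟨q0, Finset.mem_filter.mpr ⟨hq0J, rfl⟩⟩
    obtain ⟨hpJ, hpg⟩ := Finset.mem_filter.mp hpF
    have hpIcc := Finset.mem_Icc.mp (hJ hpJ)
    have maxJle : ∀ u : ℕ, (J ∩ Finset.Icc 1 u).card = 0 ∨
        ∃ q ∈ J, q ≤ u ∧ (J ∩ Finset.Icc 1 u) = (J ∩ Finset.Icc 1 q) := by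
      intro u
      rcases Finset.eq_empty_or_nonempty (J.filter (· ≤ u)) with he | hne
      · left
        rw [Finset.card_eq_zero, Finset.eq_empty_iff_forall_notMem]
        intro a ha
        simp only [Finset.mem_inter, Finset.mem_Icc] at ha
        have : a ∈ J.filter (· ≤ u) := Finset.mem_filter.mpr ⟨ha.1, ha.2.2⟩
        rw [he] at this
        exact absurd this (Finset.notMem_empty _)
      · right
        set q := (J.filter (· ≤ u)).max' hne with hq
        have hqmem := (J.filter (· ≤ u)).max'_mem hne
        have hqJ : q ∈ J := (Finset.mem_filter.mp hqmem).1
        have hqu : q ≤ u := by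
          have h := (Finset.mem_filter.mp hqmem).2
          exact h
        refine ⟨q, hqJ, hqu, ?_⟩
        ext a
        simp only [Finset.mem_inter, Finset.mem_Icc]
        constructor
        · rintro ⟨ha, h1, h2⟩
          refine ⟨ha, h1, ?_⟩
          exact (J.filter (· ≤ u)).le_max' a (Finset.mem_filter.mpr ⟨ha, h2⟩)
        · rintro ⟨ha, h1, h2⟩
          exact ⟨ha, h1, by omega⟩
    have hgq : ∀ q ∈ J, μ ≤ ((I ∩ Finset.Icc 1 q).card : ℤ) - ((J ∩ Finset.Icc 1 q).card : ℤ) :=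
      fun q hq => hq0min q hq
    have claimGA : ∀ u : ℕ, (J ∩ Finset.Icc 1 u).card = 0 ∨
        μ ≤ ((I ∩ Finset.Icc 1 u).card : ℤ) - ((J ∩ Finset.Icc 1 u).card : ℤ) := by
      intro u
      rcases maxJle u with h0 | ⟨q, hqJ, hqu, heq⟩
      · exact Or.inl h0
      · right
        have h1 := hgq q hqJ
        have h2 : (I ∩ Finset.Icc 1 q).card ≤ (I ∩ Finset.Icc 1 u).card := count_mono I hqu
        rw [heq]
        omega
    have claimGB : ∀ u : ℕ, u < p → (J ∩ Finset.Icc 1 u).card = 0 ∨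
        μ + 1 ≤ ((I ∩ Finset.Icc 1 u).card : ℤ) - ((J ∩ Finset.Icc 1 u).card : ℤ) := by
      intro u hu
      rcases maxJle u with h0 | ⟨q, hqJ, hqu, heq⟩
      · exact Or.inl h0
      · right
        have h1 := hgq q hqJ
        have hne : ((I ∩ Finset.Icc 1 q).card : ℤ) - ((J ∩ Finset.Icc 1 q).card : ℤ) ≠ μ := by
          intro he
          have : p ≤ q := hpmin q (Finset.mem_filter.mpr ⟨hqJ, he⟩)
          omega
        have h2 : (I ∩ Finset.Icc 1 q).card ≤ (I ∩ Finset.Icc 1 u).card := count_mono I hqu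
        rw [heq]
        omega
    have hJcard : 1 ≤ J.card := Finset.card_pos.mpr hJne
    have hgn : ((I ∩ Finset.Icc 1 n).card : ℤ) = (I.card : ℤ) - 1 := by
      rw [hFIn, Finset.card_erase_of_mem hE]
      omega
    have hμn : μ ≤ -1 := by
      rcases claimGA n with h0 | h1
      · rw [hFJn] at h0; omega
      · rw [hFJn] at h1; omega
    by_cases hpn : p = n
    · -- cut at 0
      have hμeq : μ = -1 := by
        have h' := hpg
        rw [hpn, hFJn] at h'
        omega
      refine ⟨0, hn, ?_⟩
      apply main 0 hn
      intro t ht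
      have e1 := cyc_count hn hJ' (ℓ := 0) (t := t) (by omega) (by omega)
      have e2 := cyc_count hn hI (ℓ := 0) (t := t) (by omega) (by omega)
      rw [e1, e2]
      simp only [Nat.zero_add, Nat.add_zero]
      rw [show min t n = t by omega, show t - n = 0 by omega, hF0 J, hF0 I]
      simp only [Finset.card_empty]
      rcases claimGB t (by omega) with h0 | h1 <;> omega
    · -- cut at p, p < n
      have hpn' : p < n := by omega
      refine ⟨p, hpn', ?_⟩
      apply main p hpn'
      intro t ht
      have e1 := cyc_count hn hJ' (ℓ := p) (t := t) (by omega) (by omega)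
      have e2 := cyc_count hn hI (ℓ := p) (t := t) (by omega) (by omega)
      rw [e1, e2]
      rcases le_or_gt (p + t) n with hw | hw
      · -- no wrap
        rw [show min (p + t) n = p + t by omega, show t + p - n = 0 by omega, hF0 J, hF0 I]
        simp only [Finset.card_empty]
        have s1 := count_split J (show p ≤ p + t by omega)
        have s2 := count_split I (show p ≤ p + t by omega)
        have hgm : μ ≤ ((I ∩ Finset.Icc 1 (p + t)).card : ℤ)
            - ((J ∩ Finset.Icc 1 (p + t)).card : ℤ) := by
          rcases claimGA (p + t) with h0 | h1
          · exfalso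
            have hmem : p ∈ J ∩ Finset.Icc 1 (p + t) :=
              Finset.mem_inter.mpr ⟨hpJ, Finset.mem_Icc.mpr (by omega)⟩
            have := Finset.card_pos.mpr ⟨p, hmem⟩
            omega
          · exact h1
        omega
      · -- wrap
        rw [show min (p + t) n = n by omega]
        have s1 := count_split J (show p ≤ n by omega)
        have s2 := count_split I (show p ≤ n by omega)
        rw [hFJn] at s1
        rw [hFIn, Finset.card_erase_of_mem hE] at s2
        have hslt : t + p - n < p := by omega
        have hgs : ((J ∩ Finset.Icc 1 (t + p - n)).card : ℤ) + μ + 1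
            ≤ ((I ∩ Finset.Icc 1 (t + p - n)).card : ℤ) := by
          rcases claimGB (t + p - n) hslt with h0 | h1
          · omega
          · omega
        omega
  · -- case n+1 ∉ I
    have hFIn : I ∩ Finset.Icc 1 n = I := (inter_Icc_top hI).2 hE
    obtain ⟨ℓ, hℓmem, hℓmin⟩ := Finset.exists_min_image (Finset.range n)
      (fun u => ((I ∩ Finset.Icc 1 u).card : ℤ) - ((J ∩ Finset.Icc 1 u).card : ℤ))
      ⟨0, Finset.mem_range.mpr hn⟩
    have hℓn : ℓ < n := Finset.mem_range.mp hℓmem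
    refine ⟨ℓ, hℓn, ?_⟩
    apply main _ hℓn
    intro t ht
    have e1 := cyc_count hn hJ' (ℓ := ℓ) (t := t) (by omega) (by omega)
    have e2 := cyc_count hn hI (ℓ := ℓ) (t := t) (by omega) (by omega)
    rw [e1, e2]
    have s1 := count_split J (show ℓ ≤ min (ℓ + t) n by omega)
    have s2 := count_split I (show ℓ ≤ min (ℓ + t) n by omega)
    have hg0 : ((I ∩ Finset.Icc 1 ℓ).card : ℤ) - ((J ∩ Finset.Icc 1 ℓ).card : ℤ) ≤ 0 := by
      have h := hℓmin 0 (Finset.mem_range.mpr hn)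
      rw [hF0 J, hF0 I] at h
      simpa using h
    have hminm : ((I ∩ Finset.Icc 1 ℓ).card : ℤ) - ((J ∩ Finset.Icc 1 ℓ).card : ℤ)
        ≤ ((I ∩ Finset.Icc 1 (min (ℓ + t) n)).card : ℤ)
          - ((J ∩ Finset.Icc 1 (min (ℓ + t) n)).card : ℤ) := by
      rcases lt_or_ge (min (ℓ + t) n) n with hc | hc
      · exact hℓmin _ (Finset.mem_range.mpr hc)
      · have hminn : min (ℓ + t) n = n := by omega
        rw [hminn, hFIn, hFJn]
        omega
    have hmins : ((I ∩ Finset.Icc 1 ℓ).card : ℤ) - ((J ∩ Finset.Icc 1 ℓ).card : ℤ)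
        ≤ ((I ∩ Finset.Icc 1 (t + ℓ - n)).card : ℤ)
          - ((J ∩ Finset.Icc 1 (t + ℓ - n)).card : ℤ) :=
      hℓmin _ (Finset.mem_range.mpr (by omega))
    rcases le_or_gt (ℓ + t) n with hw | hw
    · rw [show min (ℓ + t) n = ℓ + t by omega] at s1 s2 hminm ⊢
      rw [show t + ℓ - n = 0 by omega, hF0 J, hF0 I]
      simp only [Finset.card_empty]
      omega
    · rw [show min (ℓ + t) n = n by omega] at s1 s2 hminm ⊢
      rw [hFJn] at s1
      rw [hFIn] at s2
      omega

end GoodCut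

section UniqueHelpers
variable {n : ℕ}

lemma inter_Icc_zero (X : Finset ℕ) : X ∩ Finset.Icc 1 0 = ∅ := by
  rw [Finset.Icc_eq_empty (by omega), Finset.inter_empty]

lemma om_lt_iff {A B : Finset ℕ} {h : B.card = A.card} {p q : ℕ × ℕ}
    (hp : p ∈ om A B h) (hq : q ∈ om A B h) : p.1 < q.1 ↔ p.2 < q.2 := by
  obtain ⟨r, h1, h2⟩ := mem_om.mp hp
  obtain ⟨s, h3, h4⟩ := mem_om.mp hq
  rw [← h1, ← h3, ← h2, ← h4]
  rw [(A.orderEmbOfFin rfl).strictMono.lt_iff_lt, (B.orderEmbOfFin h).strictMono.lt_iff_lt]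

lemma init_seg {k : ℕ} {T : Finset (Fin k)}
    (hdc : ∀ s ∈ T, ∀ s' : Fin k, s' ≤ s → s' ∈ T) (s : Fin k) :
    s ∈ T ↔ s.1 < T.card := by
  constructor
  · intro hs
    have hsub : Finset.Iic s ⊆ T := fun x hx => hdc s hs x (Finset.mem_Iic.mp hx)
    have := Finset.card_le_card hsub
    rw [Fin.card_Iic] at this
    omega
  · intro hs
    by_contra hns
    have hsub : T ⊆ Finset.Iio s := by
      intro x hx
      rw [Finset.mem_Iio]
      by_contra hge
      push_neg at hge
      exact hns (hdc x hx s hge)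
    have := Finset.card_le_card hsub
    rw [Fin.card_Iio] at this
    omega

lemma om_balanced {m : ℕ} {A B : Finset ℕ} (hA1 : ∀ a ∈ A, 1 ≤ a) (hB1 : ∀ b ∈ B, 1 ≤ b)
    (h : B.card = A.card)
    (hbal : (A ∩ Finset.Icc 1 m).card = (B ∩ Finset.Icc 1 m).card) :
    ∀ p ∈ om A B h, (p.1 ≤ m ↔ p.2 ≤ m) := by
  intro p hp
  obtain ⟨r, h1, h2⟩ := mem_om.mp hp
  have cA := count_eq rfl hA1 m
  have cB := count_eq h hB1 m
  have iA := init_seg (T := Finset.univ.filter fun s : Fin A.card => A.orderEmbOfFin rfl s ≤ m)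
    (fun s hs s' hle => by
      simp only [Finset.mem_filter, Finset.mem_univ, true_and] at hs ⊢
      exact le_trans ((A.orderEmbOfFin rfl).monotone hle) hs) r
  have iB := init_seg (T := Finset.univ.filter fun s : Fin A.card => B.orderEmbOfFin h s ≤ m)
    (fun s hs s' hle => by
      simp only [Finset.mem_filter, Finset.mem_univ, true_and] at hs ⊢
      exact le_trans ((B.orderEmbOfFin h).monotone hle) hs) r
  simp only [Finset.mem_filter, Finset.mem_univ, true_and] at iA iB
  rw [← h1, ← h2, iA, iB, ← cA, ← cB, hbal]

lemma tau_comp (hn : 0 < n) {ℓ ℓ' : ℕ} (hℓ : ℓ < n) (hℓ' : ℓ' < n) (x : ℕ) :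
    cycShiftExt n (n - (if ℓ ≤ ℓ' then ℓ' - ℓ else ℓ' + n - ℓ)) (cycShiftExt n (n - ℓ) x)
      = cycShiftExt n (n - ℓ') x := by
  rw [cyc_comp hn]
  rcases le_or_gt ℓ ℓ' with hc | hc
  · rw [if_pos hc, show n - (ℓ' - ℓ) + (n - ℓ) = n + (n - ℓ') by omega]
    rw [← cyc_mod, Nat.add_mod_left, cyc_mod]
  · rw [if_neg (by omega), show n - (ℓ' + n - ℓ) + (n - ℓ) = n - ℓ' by omega]

lemma sigma_comp_tau (hn : 0 < n) {ℓ ℓ' : ℕ} (hℓ : ℓ < n) (hℓ' : ℓ' < n) (x : ℕ) :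
    cycShiftExt n ℓ' (cycShiftExt n (n - (if ℓ ≤ ℓ' then ℓ' - ℓ else ℓ' + n - ℓ)) x)
      = cycShiftExt n ℓ x := by
  rw [cyc_comp hn]
  rcases le_or_gt ℓ ℓ' with hc | hc
  · rw [if_pos hc, show ℓ' + (n - (ℓ' - ℓ)) = n + ℓ by omega]
    rw [← cyc_mod, Nat.add_mod_left, cyc_mod]
  · rw [if_neg (by omega), show ℓ' + (n - (ℓ' + n - ℓ)) = ℓ by omega]

end UniqueHelpers

section NCShift
variable {n : ℕ}

lemma nc_balanced (hn : 0 < n) {m : ℕ} (hm : m ≤ n) {A B : Finset ℕ}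
    (hA : A ⊆ Finset.Icc 1 n) (hB : B ⊆ Finset.Icc 1 n) (h : B.card = A.card)
    (hbal : (A ∩ Finset.Icc 1 m).card = (B ∩ Finset.Icc 1 m).card) :
    ∀ p ∈ (om A B h).image (fun p => (cycShiftExt n (n - m) p.1, cycShiftExt n (n - m) p.2)),
      ∀ q ∈ (om A B h).image (fun p => (cycShiftExt n (n - m) p.1, cycShiftExt n (n - m) p.2)),
        p.1 < q.1 → p.2 < q.2 := by
  have val : ∀ a ∈ Finset.Icc 1 n,
      (m < a ∧ 1 ≤ a ∧ a ≤ n ∧ cycShiftExt n (n - m) a = a - m) ∨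
      (a ≤ m ∧ 1 ≤ a ∧ a ≤ n ∧ cycShiftExt n (n - m) a = a + n - m) := by
    intro a ha
    have hc := cyc_tau hn m a hm ha
    have hb := Finset.mem_Icc.mp ha
    rcases le_or_gt a m with hle | hlt
    · right
      refine ⟨hle, hb.1, hb.2, ?_⟩
      rw [hc, if_neg (by omega)]
    · left
      refine ⟨hlt, hb.1, hb.2, ?_⟩
      rw [hc, if_pos hlt]
  intro p hp q hq hlt
  obtain ⟨p₀, hp₀, rfl⟩ := Finset.mem_image.mp hp
  obtain ⟨q₀, hq₀, rfl⟩ := Finset.mem_image.mp hq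
  simp only at hlt ⊢
  have hpmem := (om_pm h).1 p₀ hp₀
  have hqmem := (om_pm h).1 q₀ hq₀
  have hiff1 := om_lt_iff hp₀ hq₀
  have hiff2 := om_lt_iff hq₀ hp₀
  have hA1 : ∀ a ∈ A, 1 ≤ a := fun a ha => (Finset.mem_Icc.mp (hA ha)).1
  have hB1 : ∀ b ∈ B, 1 ≤ b := fun b hb => (Finset.mem_Icc.mp (hB hb)).1
  have hbp := om_balanced hA1 hB1 h hbal p₀ hp₀
  have hbq := om_balanced hA1 hB1 h hbal q₀ hq₀
  have v1 := val p₀.1 (hA hpmem.1)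
  have v2 := val p₀.2 (hB hpmem.2)
  have v3 := val q₀.1 (hA hqmem.1)
  have v4 := val q₀.2 (hB hqmem.2)
  omega

lemma nc_low (hn : 0 < n) {m : ℕ} (hm : m ≤ n) {A B : Finset ℕ}
    (hA : A ⊆ Finset.Icc 1 (n + 1)) (hB : B ⊆ Finset.Icc 1 n) (h : B.card = A.card)
    (hAlow : ∀ a ∈ A, a = n + 1 ∨ m < a) (hBlow : ∀ b ∈ B, m < b) :
    ∀ p ∈ (om A B h).image (fun p => (cycShiftExt n (n - m) p.1, cycShiftExt n (n - m) p.2)),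
      ∀ q ∈ (om A B h).image (fun p => (cycShiftExt n (n - m) p.1, cycShiftExt n (n - m) p.2)),
        p.1 < q.1 → p.2 < q.2 := by
  have val : ∀ a, a ∈ Finset.Icc 1 (n + 1) → (a = n + 1 ∨ m < a) →
      (a = n + 1 ∧ cycShiftExt n (n - m) a = n + 1) ∨
      (m < a ∧ 1 ≤ a ∧ a ≤ n ∧ cycShiftExt n (n - m) a = a - m) := by
    intro a ha hcase
    have hb := Finset.mem_Icc.mp ha
    rcases eq_or_ne a (n + 1) with rfl | hne
    · left
      exact ⟨rfl, by simp [cycShiftExt]⟩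
    · right
      have han : a ≤ n := by omega
      have hc := cyc_tau hn m a hm (Finset.mem_Icc.mpr (by omega))
      have hma : m < a := by rcases hcase with hc' | hc' <;> omega
      refine ⟨hma, by omega, han, ?_⟩
      rw [hc, if_pos hma]
  intro p hp q hq hlt
  obtain ⟨p₀, hp₀, rfl⟩ := Finset.mem_image.mp hp
  obtain ⟨q₀, hq₀, rfl⟩ := Finset.mem_image.mp hq
  simp only at hlt ⊢
  have hpmem := (om_pm h).1 p₀ hp₀
  have hqmem := (om_pm h).1 q₀ hq₀
  have hiff1 := om_lt_iff hp₀ hq₀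
  have hiff2 := om_lt_iff hq₀ hp₀
  have v1 := val p₀.1 (hA hpmem.1) (hAlow _ hpmem.1)
  have v3 := val q₀.1 (hA hqmem.1) (hAlow _ hqmem.1)
  have hBmem1 := Finset.mem_Icc.mp (hB hpmem.2)
  have hBmem2 := Finset.mem_Icc.mp (hB hqmem.2)
  have v2 := val p₀.2 (Finset.mem_Icc.mpr (by omega)) (Or.inr (hBlow _ hpmem.2))
  have v4 := val q₀.2 (Finset.mem_Icc.mpr (by omega)) (Or.inr (hBlow _ hqmem.2))
  omega

lemma nc_high (hn : 0 < n) {m : ℕ} (hm : m ≤ n) {A B : Finset ℕ}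
    (hA : A ⊆ Finset.Icc 1 (n + 1)) (hB : B ⊆ Finset.Icc 1 n) (h : B.card = A.card)
    (hAhigh : ∀ a ∈ A, a = n + 1 ∨ a ≤ m) (hBhigh : ∀ b ∈ B, b ≤ m) :
    ∀ p ∈ (om A B h).image (fun p => (cycShiftExt n (n - m) p.1, cycShiftExt n (n - m) p.2)),
      ∀ q ∈ (om A B h).image (fun p => (cycShiftExt n (n - m) p.1, cycShiftExt n (n - m) p.2)),
        p.1 < q.1 → p.2 < q.2 := by
  have val : ∀ a, a ∈ Finset.Icc 1 (n + 1) → (a = n + 1 ∨ a ≤ m) →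
      (a = n + 1 ∧ cycShiftExt n (n - m) a = n + 1) ∨
      (a ≤ m ∧ 1 ≤ a ∧ a ≤ n ∧ cycShiftExt n (n - m) a = a + n - m) := by
    intro a ha hcase
    have hb := Finset.mem_Icc.mp ha
    rcases eq_or_ne a (n + 1) with rfl | hne
    · left
      exact ⟨rfl, by simp [cycShiftExt]⟩
    · right
      have han : a ≤ n := by omega
      have hma : a ≤ m := by rcases hcase with hc' | hc' <;> omega
      have hc := cyc_tau hn m a hm (Finset.mem_Icc.mpr (by omega))
      refine ⟨hma, by omega, han, ?_⟩
      rw [hc, if_neg (by omega)]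
  intro p hp q hq hlt
  obtain ⟨p₀, hp₀, rfl⟩ := Finset.mem_image.mp hp
  obtain ⟨q₀, hq₀, rfl⟩ := Finset.mem_image.mp hq
  simp only at hlt ⊢
  have hpmem := (om_pm h).1 p₀ hp₀
  have hqmem := (om_pm h).1 q₀ hq₀
  have hiff1 := om_lt_iff hp₀ hq₀
  have hiff2 := om_lt_iff hq₀ hp₀
  have v1 := val p₀.1 (hA hpmem.1) (hAhigh _ hpmem.1)
  have v3 := val q₀.1 (hA hqmem.1) (hAhigh _ hqmem.1)
  have hBmem1 := Finset.mem_Icc.mp (hB hpmem.2)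
  have hBmem2 := Finset.mem_Icc.mp (hB hqmem.2)
  have v2 := val p₀.2 (Finset.mem_Icc.mpr (by omega)) (Or.inr (hBhigh _ hpmem.2))
  have v4 := val q₀.2 (Finset.mem_Icc.mpr (by omega)) (Or.inr (hBhigh _ hqmem.2))
  omega

end NCShift

section CutCompare
variable {n : ℕ}

lemma cut_compare (hn : 0 < n) {I J : Finset ℕ} (hI : I ⊆ Finset.Icc 1 (n + 1))
    (hJ : J ⊆ Finset.Icc 1 n) {ℓ ℓ' : ℕ} (hℓ : ℓ < n) (hℓ' : ℓ' < n)
    {A B A' B' : Finset ℕ}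
    (hAd : A = I.image (cycShiftExt n (n - ℓ))) (hBd : B = J.image (cycShiftExt n (n - ℓ)))
    (hAd' : A' = I.image (cycShiftExt n (n - ℓ'))) (hBd' : B' = J.image (cycShiftExt n (n - ℓ')))
    (h : B.card = A.card) (h' : B'.card = A'.card)
    (hw : NCWIext n (om A B h)) (hw' : NCWIext n (om A' B' h')) :
    (om A B h).image (fun p => (cycShiftExt n ℓ p.1, cycShiftExt n ℓ p.2))
      = (om A' B' h').image (fun p => (cycShiftExt n ℓ' p.1, cycShiftExt n ℓ' p.2)) := by
  rcases eq_or_ne ℓ ℓ' with rfl | hnel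
  · subst hAd hBd
    subst hAd' hBd'
    rfl
  · obtain ⟨m, hm⟩ : ∃ m, m = if ℓ ≤ ℓ' then ℓ' - ℓ else ℓ' + n - ℓ := ⟨_, rfl⟩
    have hm1 : 1 ≤ m := by rw [hm]; split_ifs <;> omega
    have hmn : m < n := by rw [hm]; split_ifs <;> omega
    have hAsub : A ⊆ Finset.Icc 1 (n + 1) := by
      rw [hAd]; intro b hb
      obtain ⟨a, ha, rfl⟩ := Finset.mem_image.mp hb
      exact cyc_mem hn _ a (hI ha)
    have hBsub : B ⊆ Finset.Icc 1 n := by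
      rw [hBd]; intro b hb
      obtain ⟨a, ha, rfl⟩ := Finset.mem_image.mp hb
      exact cyc_mem' hn _ a (hJ ha)
    have hA'sub : A' ⊆ Finset.Icc 1 (n + 1) := by
      rw [hAd']; intro b hb
      obtain ⟨a, ha, rfl⟩ := Finset.mem_image.mp hb
      exact cyc_mem hn _ a (hI ha)
    have hB'sub : B' ⊆ Finset.Icc 1 n := by
      rw [hBd']; intro b hb
      obtain ⟨a, ha, rfl⟩ := Finset.mem_image.mp hb
      exact cyc_mem' hn _ a (hJ ha)
    have hBsub' : B ⊆ Finset.Icc 1 (n + 1) := fun b hb => by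
      have := Finset.mem_Icc.mp (hBsub hb); simp only [Finset.mem_Icc]; omega
    have hA'm : A' = A.image (cycShiftExt n (n - m)) := by
      rw [hAd', hAd, Finset.image_image]
      apply Finset.image_congr
      intro x hx
      simp only [Function.comp]
      rw [hm]
      exact (tau_comp hn hℓ hℓ' x).symm
    have hB'm : B' = B.image (cycShiftExt n (n - m)) := by
      rw [hBd', hBd, Finset.image_image]
      apply Finset.image_congr
      intro x hx
      simp only [Function.comp]
      rw [hm]
      exact (tau_comp hn hℓ hℓ' x).symm
    -- counting facts
    have hb2 := bridge2 hAsub hBsub h hw.2 m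
    have hb2' := bridge2 hA'sub hB'sub h' hw'.2 (n - m)
    have eA := cyc_count hn hAsub (ℓ := m) (t := n - m) (by omega) (by omega)
    have eB := cyc_count hn hBsub' (ℓ := m) (t := n - m) (by omega) (by omega)
    rw [← hA'm, show min (m + (n - m)) n = n by omega, show n - m + m - n = 0 by omega,
      inter_Icc_zero, Finset.card_empty] at eA
    rw [← hB'm, show min (m + (n - m)) n = n by omega, show n - m + m - n = 0 by omega,
      inter_Icc_zero, Finset.card_empty] at eB
    have sA := count_split A (show m ≤ n by omega)
    have sB := count_split B (show m ≤ n by omega)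
    have tB : B ∩ Finset.Icc 1 n = B := Finset.inter_eq_left.mpr hBsub
    have tBc : (B ∩ Finset.Icc 1 n).card = B.card := by rw [tB]
    have hcardB' : B'.card = B.card := by
      rw [hB'm]; exact card_image_cyc hn hBsub' _ (by omega)
    have htopA : n + 1 ∈ A ↔ n + 1 ∈ I := by rw [hAd]; exact image_top_iff hn _
    have htopA' : n + 1 ∈ A' ↔ n + 1 ∈ I := by rw [hAd']; exact image_top_iff hn _
    -- the key noncrossing property of the shifted matching
    have key : ∀ p ∈ (om A B h).image
          (fun p => (cycShiftExt n (n - m) p.1, cycShiftExt n (n - m) p.2)),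
        ∀ q ∈ (om A B h).image
          (fun p => (cycShiftExt n (n - m) p.1, cycShiftExt n (n - m) p.2)),
        p.1 < q.1 → p.2 < q.2 := by
      by_cases htopI : n + 1 ∈ I
      · -- e = 1
        have htA : n + 1 ∈ A := htopA.mpr htopI
        have htA' : n + 1 ∈ A' := htopA'.mpr htopI
        have tA : A ∩ Finset.Icc 1 n = A.erase (n + 1) := (inter_Icc_top hAsub).1 htA
        have tAc : (A ∩ Finset.Icc 1 n).card = A.card - 1 := by
          rw [tA, Finset.card_erase_of_mem htA]
        have hAk : 1 ≤ A.card := Finset.card_pos.mpr ⟨_, htA⟩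
        by_cases hc2 : n + 1 ∈ A' ∧ B' ⊆ Finset.Icc 1 (n - m)
        · -- empty-low case
          rw [if_pos hc2] at hb2'
          have hB'full : (B' ∩ Finset.Icc 1 (n - m)).card = B.card := by
            rw [Finset.inter_eq_left.mpr hc2.2, hcardB']
          have hcB0 : (B ∩ Finset.Icc 1 m).card = 0 := by omega
          have hcA0 : (A ∩ Finset.Icc 1 m).card = 0 := by
            rcases le_or_gt ((A ∩ Finset.Icc 1 m).card) 0 with hc | hc
            · omega
            · exfalso
              have hx := hb2
              split_ifs at hx <;> omega
          have hAlow : ∀ a ∈ A, a = n + 1 ∨ m < a := by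
            intro a ha
            by_contra hcon
            push_neg at hcon
            have h1 : 1 ≤ a := (Finset.mem_Icc.mp (hAsub ha)).1
            have : a ∈ A ∩ Finset.Icc 1 m :=
              Finset.mem_inter.mpr ⟨ha, Finset.mem_Icc.mpr ⟨h1, by omega⟩⟩
            have := Finset.card_pos.mpr ⟨a, this⟩
            omega
          have hBlow : ∀ b ∈ B, m < b := by
            intro b hb
            by_contra hcon
            push_neg at hcon
            have h1 : 1 ≤ b := (Finset.mem_Icc.mp (hBsub hb)).1
            have : b ∈ B ∩ Finset.Icc 1 m :=
              Finset.mem_inter.mpr ⟨hb, Finset.mem_Icc.mpr ⟨h1, hcon⟩⟩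
            have := Finset.card_pos.mpr ⟨b, this⟩
            omega
          exact nc_low hn (by omega) hAsub hBsub h hAlow hBlow
        · -- empty-high case
          rw [if_neg hc2] at hb2'
          have hc1 : n + 1 ∈ A ∧ B ⊆ Finset.Icc 1 m := by
            constructor
            · exact htA
            · -- show B ⊆ Icc 1 m; first derive the counting constraint
              by_contra hcon
              rw [if_neg (fun hcc => hcon hcc.2)] at hb2
              exfalso
              -- hb2 : cB ≤ cA ; hb2' : B.card - cB(m+1,n)... 
              have hnot2 : ¬ (B' ⊆ Finset.Icc 1 (n - m)) := fun hcc => hc2 ⟨htA', hcc⟩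
              -- from hb2' : (B'∩).card ≤ (A'∩).card
              omega
          rw [if_pos hc1] at hb2
          have hBfull : (B ∩ Finset.Icc 1 m).card = B.card := by
            rw [Finset.inter_eq_left.mpr hc1.2]
          have hcAval : (A ∩ Finset.Icc 1 m).card + 1 = A.card := by omega
          have hAhigh : ∀ a ∈ A, a = n + 1 ∨ a ≤ m := by
            intro a ha
            by_contra hcon
            push_neg at hcon
            have hane : a ≠ n + 1 := hcon.1
            have hagt : m < a := by omega
            have hmem1 : a ∈ A.erase (n + 1) := Finset.mem_erase.mpr ⟨hane, ha⟩
            have hsub2 : A ∩ Finset.Icc 1 m ⊆ (A.erase (n + 1)).erase a := by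
              intro x hx
              obtain ⟨hx1, hx2⟩ := Finset.mem_inter.mp hx
              have hxm := Finset.mem_Icc.mp hx2
              refine Finset.mem_erase.mpr ⟨by omega, Finset.mem_erase.mpr ⟨by omega, hx1⟩⟩
            have hcard2 : ((A.erase (n + 1)).erase a).card = A.card - 2 := by
              rw [Finset.card_erase_of_mem hmem1, Finset.card_erase_of_mem htA]
              omega
            have hge2 : 2 ≤ A.card := by
              have h1 := Finset.card_pos.mpr ⟨a, hmem1⟩
              have h2 := Finset.card_erase_of_mem htA
              omega
            have := Finset.card_le_card hsub2
            omega
          exact nc_high hn (by omega) hAsub hBsub h hAhigh (by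
            intro b hb
            have := Finset.mem_Icc.mp (hc1.2 hb)
            omega)
      · -- e = 0 : balanced case
        have htA : n + 1 ∉ A := fun hc => htopI (htopA.mp hc)
        have htA' : n + 1 ∉ A' := fun hc => htopI (htopA'.mp hc)
        have tA : A ∩ Finset.Icc 1 n = A := (inter_Icc_top hAsub).2 htA
        have tAc : (A ∩ Finset.Icc 1 n).card = A.card := by rw [tA]
        rw [if_neg (fun hc => htA hc.1)] at hb2
        rw [if_neg (fun hc => htA' hc.1)] at hb2'
        have hbal : (A ∩ Finset.Icc 1 m).card = (B ∩ Finset.Icc 1 m).card := by omega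
        have hAn : A ⊆ Finset.Icc 1 n := by
          intro a ha
          have hx := Finset.mem_Icc.mp (hAsub ha)
          have : a ≠ n + 1 := fun he => htA (he ▸ ha)
          simp only [Finset.mem_Icc]
          omega
        exact nc_balanced hn (by omega) hAn hBsub h hbal
    -- conclude equality of matchings
    have hpm_img : IsPM A' B' ((om A B h).image
        (fun p => (cycShiftExt n (n - m) p.1, cycShiftExt n (n - m) p.2))) := by
      have hres := pm_image (φ := cycShiftExt n (n - m)) (S := ↑(Finset.Icc 1 (n + 1)))
        (cyc_injOn hn _ (by omega)) (by exact_mod_cast hAsub) (by exact_mod_cast hBsub') (om_pm h)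
      rwa [← hA'm, ← hB'm] at hres
    have step : (om A B h).image
        (fun p => (cycShiftExt n (n - m) p.1, cycShiftExt n (n - m) p.2)) = om A' B' h' :=
      ncpm_unique A'.card A' B' _ _ le_rfl hpm_img (om_pm h') key (om_nc h')
    rw [← step, Finset.image_image]
    apply Finset.image_congr
    intro p hp
    simp only [Function.comp]
    have hcomp1 := sigma_comp_tau hn hℓ hℓ' p.1
    have hcomp2 := sigma_comp_tau hn hℓ hℓ' p.2
    rw [hm]
    rw [hcomp1, hcomp2]

end CutCompare

section Final
variable {n : ℕ}

lemma family_canon (hn : 0 < n) {I J : Finset ℕ} {M : Finset (ℕ × ℕ)}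
    (hI : I ⊆ Finset.Icc 1 (n + 1)) (hJ : J ⊆ Finset.Icc 1 n) (hcard : I.card = J.card)
    (hM : IsPM I J M) (hfam : MemDyckFamilyExt n M) :
    ∃ ℓ, ℓ < n ∧ ∃ A B : Finset ℕ,
      A = I.image (cycShiftExt n (n - ℓ)) ∧ B = J.image (cycShiftExt n (n - ℓ)) ∧
      ∃ h : B.card = A.card, NCWIext n (om A B h) ∧
        M = (om A B h).image (fun p => (cycShiftExt n ℓ p.1, cycShiftExt n ℓ p.2)) := by
  obtain ⟨ℓ, hℓ, M₀, hbounds, hpm₀, hncwi, hMeq⟩ := hfam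
  set A := M₀.image Prod.fst with hA
  set B := M₀.image Prod.snd with hB
  have hAsub : A ⊆ Finset.Icc 1 (n + 1) := by
    intro a ha
    obtain ⟨p, hp, rfl⟩ := Finset.mem_image.mp ha
    exact (hbounds p hp).1
  have hBsub : B ⊆ Finset.Icc 1 n := by
    intro a ha
    obtain ⟨p, hp, rfl⟩ := Finset.mem_image.mp ha
    exact (hbounds p hp).2
  obtain ⟨hMf, hMs⟩ := pm_supports hM
  have hIimg : I = A.image (cycShiftExt n ℓ) := by
    rw [← hMf, hMeq, Finset.image_image, hA, Finset.image_image]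
    rfl
  have hJimg : J = B.image (cycShiftExt n ℓ) := by
    rw [← hMs, hMeq, Finset.image_image, hB, Finset.image_image]
    rfl
  have hAeq : A = I.image (cycShiftExt n (n - ℓ)) := by
    rw [hIimg, Finset.image_image]
    symm
    have he : ∀ a ∈ (A : Set ℕ), (cycShiftExt n (n - ℓ) ∘ cycShiftExt n ℓ) a = id a :=
      fun a ha => cyc_inv' hn ℓ (by omega) a (hAsub (by exact_mod_cast ha))
    rw [Finset.image_congr he, Finset.image_id]
  have hBeq : B = J.image (cycShiftExt n (n - ℓ)) := by
    rw [hJimg, Finset.image_image]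
    symm
    have he : ∀ a ∈ (B : Set ℕ), (cycShiftExt n (n - ℓ) ∘ cycShiftExt n ℓ) a = id a :=
      fun a ha => cyc_inv' hn ℓ (by omega) a (by
        have := Finset.mem_Icc.mp (hBsub (by exact_mod_cast ha))
        simp only [Finset.mem_Icc]; omega)
    rw [Finset.image_congr he, Finset.image_id]
  have hcAB : B.card = A.card := by
    have c1 : I.card = A.card := by
      rw [hIimg]
      exact Finset.card_image_of_injOn ((cyc_injOn hn ℓ (by omega)).mono
        (fun a ha => by exact_mod_cast hAsub ha))
    have c2 : J.card = B.card := by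
      rw [hJimg]
      refine Finset.card_image_of_injOn ((cyc_injOn hn ℓ (by omega)).mono
        (fun a ha => ?_))
      have := Finset.mem_Icc.mp (hBsub (by exact_mod_cast ha))
      simp only [Set.mem_setOf_eq, Finset.coe_Icc, Set.mem_Icc]
      omega
    omega
  have hM₀ : M₀ = om A B hcAB :=
    ncpm_unique A.card A B M₀ (om A B hcAB) le_rfl hpm₀ (om_pm _) hncwi.1 (om_nc _)
  refine ⟨ℓ, hℓ, A, B, hAeq, hBeq, hcAB, ?_, ?_⟩
  · rwa [hM₀] at hncwi
  · rw [hMeq, hM₀]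

/-- (Supports axiom for `ℳ^ext_n`.) For all `I ⊆ [n+1]`, `J ⊆ [n]` with `|I| = |J|`
there is exactly one perfect matching between `I` and `J` belonging to `ℳ^ext_n`. -/
theorem dyckpaths_stmt7 (n : ℕ) (hn : 0 < n) (I J : Finset ℕ)
    (hI : I ⊆ Finset.Icc 1 (n + 1)) (hJ : J ⊆ Finset.Icc 1 n)
    (hcard : I.card = J.card) :
    ∃! M : Finset (ℕ × ℕ), IsPM I J M ∧ MemDyckFamilyExt n M := by
  have hJ' : J ⊆ Finset.Icc 1 (n + 1) := fun a ha => by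
    have := Finset.mem_Icc.mp (hJ ha); simp only [Finset.mem_Icc]; omega
  obtain ⟨ℓ, hℓ, hpre⟩ := good_cut hn hI hJ hcard
  set A := I.image (cycShiftExt n (n - ℓ)) with hAd
  set B := J.image (cycShiftExt n (n - ℓ)) with hBd
  have hAsub : A ⊆ Finset.Icc 1 (n + 1) := by
    intro b hb
    obtain ⟨a, ha, rfl⟩ := Finset.mem_image.mp hb
    exact cyc_mem hn _ a (hI ha)
  have hBsub : B ⊆ Finset.Icc 1 n := by
    intro b hb
    obtain ⟨a, ha, rfl⟩ := Finset.mem_image.mp hb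
    exact cyc_mem' hn _ a (hJ ha)
  have hBsub' : B ⊆ Finset.Icc 1 (n + 1) := fun b hb => by
    have := Finset.mem_Icc.mp (hBsub hb); simp only [Finset.mem_Icc]; omega
  have hAB : B.card = A.card := by
    rw [hAd, hBd, card_image_cyc hn hI _ (by omega), card_image_cyc hn hJ' _ (by omega), hcard]
  have hwi : NCWIext n (om A B hAB) := bridge1 hn hAsub hBsub hAB hpre
  have hIimg : A.image (cycShiftExt n ℓ) = I := by
    rw [hAd, Finset.image_image]
    have he : ∀ a ∈ (I : Set ℕ), (cycShiftExt n ℓ ∘ cycShiftExt n (n - ℓ)) a = id a :=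
      fun a ha => cyc_inv hn ℓ (by omega) a (hI (by exact_mod_cast ha))
    rw [Finset.image_congr he, Finset.image_id]
  have hJimg : B.image (cycShiftExt n ℓ) = J := by
    rw [hBd, Finset.image_image]
    have he : ∀ a ∈ (J : Set ℕ), (cycShiftExt n ℓ ∘ cycShiftExt n (n - ℓ)) a = id a :=
      fun a ha => cyc_inv hn ℓ (by omega) a (hJ' (by exact_mod_cast ha))
    rw [Finset.image_congr he, Finset.image_id]
  refine ⟨(om A B hAB).image (fun p => (cycShiftExt n ℓ p.1, cycShiftExt n ℓ p.2)), ⟨?_, ?_⟩, ?_⟩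
  · -- IsPM
    have hres := pm_image (φ := cycShiftExt n ℓ) (S := ↑(Finset.Icc 1 (n + 1)))
      (cyc_injOn hn ℓ (by omega)) (by exact_mod_cast hAsub) (by exact_mod_cast hBsub')
      (om_pm hAB)
    rwa [hIimg, hJimg] at hres
  · -- family membership
    refine ⟨ℓ, hℓ, om A B hAB, ?_, ?_, hwi, rfl⟩
    · intro p hp
      exact ⟨hAsub ((om_pm hAB).1 p hp).1, hBsub ((om_pm hAB).1 p hp).2⟩
    · rw [om_fst hAB, om_snd hAB]
      exact om_pm hAB
  · -- uniqueness
    rintro M' ⟨hM'pm, hM'fam⟩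
    obtain ⟨ℓ', hℓ', A', B', hA'd, hB'd, h', hw', hM'eq⟩ :=
      family_canon hn hI hJ hcard hM'pm hM'fam
    rw [hM'eq]
    exact cut_compare hn hI hJ hℓ' hℓ hA'd hB'd hAd hBd h' hAB hw' hwi

end Final
end

section
/- For every positive integer n, if M ∈ ℳ^ext_n is a perfect matching between I ⊆ [n+1] and J ⊆ [n] and M' ⊆ M, then M' (which is a perfect matching between the set of first coordinates and the set of second coordinates of its pairs) also belongs to ℳ^ext_n. -/
/-- (Closure axiom for `ℳ^ext_n`.) Any sub-matching of a matching of `ℳ^ext_n`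
is again in `ℳ^ext_n`. -/
theorem dyckpaths_stmt8 (n : ℕ) (hn : 0 < n) (I J : Finset ℕ)
    (hI : I ⊆ Finset.Icc 1 (n + 1)) (hJ : J ⊆ Finset.Icc 1 n)
    (M : Finset (ℕ × ℕ)) (hM : IsPM I J M) (hmem : MemDyckFamilyExt n M)
    (M' : Finset (ℕ × ℕ)) (hM' : M' ⊆ M) :
    MemDyckFamilyExt n M' := by
  obtain ⟨ℓ, hℓ, M₀, hbound, ⟨h1, h2, h3⟩, ⟨hnc1, hnc2⟩, hMeq⟩ := hmem
  classical
  refine ⟨ℓ, hℓ, M₀.filter (fun p => (cycShiftExt n ℓ p.1, cycShiftExt n ℓ p.2) ∈ M'),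
    ?_, ⟨?_, ?_, ?_⟩, ⟨?_, ?_⟩, ?_⟩
  · intro p hp; exact hbound p (Finset.mem_filter.mp hp).1
  · intro p hp
    exact ⟨Finset.mem_image_of_mem _ hp, Finset.mem_image_of_mem _ hp⟩
  · intro i hi
    obtain ⟨p, hp, hpi⟩ := Finset.mem_image.mp hi
    have hpM₀ := (Finset.mem_filter.mp hp).1
    have huniq := h2 i (Finset.mem_image.mpr ⟨p, hpM₀, hpi⟩)
    have hmem2 : (i, p.2) ∈ M₀.filter (fun p => (cycShiftExt n ℓ p.1, cycShiftExt n ℓ p.2) ∈ M') := by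
      rw [← hpi]; exact hp
    refine ⟨p.2, hmem2, ?_⟩
    intro j hj
    exact huniq.unique (Finset.mem_filter.mp hj).1 (Finset.mem_filter.mp hmem2).1
  · intro j hj
    obtain ⟨p, hp, hpj⟩ := Finset.mem_image.mp hj
    have hpM₀ := (Finset.mem_filter.mp hp).1
    have huniq := h3 j (Finset.mem_image.mpr ⟨p, hpM₀, hpj⟩)
    have hmem2 : (p.1, j) ∈ M₀.filter (fun p => (cycShiftExt n ℓ p.1, cycShiftExt n ℓ p.2) ∈ M') := by
      rw [← hpj]; exact hp
    refine ⟨p.1, hmem2, ?_⟩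
    intro i hi
    exact huniq.unique (Finset.mem_filter.mp hi).1 (Finset.mem_filter.mp hmem2).1
  · intro p hp q hq
    exact hnc1 p (Finset.mem_filter.mp hp).1 q (Finset.mem_filter.mp hq).1
  · intro p hp
    exact hnc2 p (Finset.mem_filter.mp hp).1
  · ext q
    simp only [Finset.mem_image, Finset.mem_filter]
    constructor
    · intro hq
      have := hM' hq
      rw [hMeq] at this
      obtain ⟨p, hp, hpq⟩ := Finset.mem_image.mp this
      exact ⟨p, ⟨hp, hpq ▸ hq⟩, hpq⟩
    · rintro ⟨p, ⟨hp, hq⟩, rfl⟩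
      exact hq
end

section
/- Let n be a positive integer, let D ⊆ [n]×[n] be the set of squares of a Dyck path in the n×n grid, and let ℓ ∈ {0,…,n−1}. If M is a perfect matching (between the set of first coordinates and the set of second coordinates of its pairs) with M ⊆ {(σ_ℓ(i), σ_ℓ(j)) : (i,j) ∈ D}, then M belongs to ℳ_n. -/
/-- A single step of a monotone lattice path: move one unit right or one unit up. -/
def GridStep (p q : ℕ × ℕ) : Prop := q = (p.1 + 1, p.2) ∨ q = (p.1, p.2 + 1)

/-- `L` is (the sequence of squares of) a Dyck path in the `n × n` grid: `2n - 1`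
squares from `(1,1)` to `(n,n)`, each obtained from the previous one by a unit step,
with every square `(i,j)` satisfying `i ≤ j`. -/
def IsDyckPath (n : ℕ) (L : List (ℕ × ℕ)) : Prop :=
  L.length = 2 * n - 1 ∧
  L.head? = some (1, 1) ∧
  L.getLast? = some (n, n) ∧
  L.Chain' GridStep ∧
  (∀ p ∈ L, p.1 ≤ p.2)

lemma gridstep_le {p q : ℕ × ℕ} (h : GridStep p q) : p.1 ≤ q.1 ∧ p.2 ≤ q.2 := by
  rcases h with h | h <;> simp [h]

lemma chain_head_le : ∀ (a : ℕ × ℕ) (t : List (ℕ × ℕ)), List.Chain GridStep a t →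
    ∀ p ∈ a :: t, a.1 ≤ p.1 ∧ a.2 ≤ p.2 := by
  intro a t
  induction t generalizing a with
  | nil => intro _ p hp; simp at hp; subst hp; exact ⟨le_refl _, le_refl _⟩
  | cons c t ih =>
    intro h p hp
    rcases List.chain_cons.mp h with ⟨hac, hct⟩
    have h1 := gridstep_le hac
    rcases List.mem_cons.mp hp with rfl | hp
    · exact ⟨le_refl _, le_refl _⟩
    · have h2 := ih c hct p hp
      exact ⟨le_trans h1.1 h2.1, le_trans h1.2 h2.2⟩

lemma chain_le_last : ∀ (a : ℕ × ℕ) (t : List (ℕ × ℕ)) (b : ℕ × ℕ),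
    List.Chain GridStep a t → (a :: t).getLast? = some b →
    ∀ p ∈ a :: t, p.1 ≤ b.1 ∧ p.2 ≤ b.2 := by
  intro a t
  induction t generalizing a with
  | nil =>
    intro b _ hb p hp
    simp at hb hp
    subst hb; subst hp
    exact ⟨le_refl _, le_refl _⟩
  | cons c t ih =>
    intro b h hb p hp
    rcases List.chain_cons.mp h with ⟨hac, hct⟩
    have hb' : (c :: t).getLast? = some b := by simpa using hb
    rcases List.mem_cons.mp hp with rfl | hp
    · have h1 := gridstep_le hac
      have h2 := ih c b hct hb' c (by simp)
      exact ⟨le_trans h1.1 h2.1, le_trans h1.2 h2.2⟩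
    · exact ih c b hct hb' p hp

lemma chain_comp : ∀ (a : ℕ × ℕ) (t : List (ℕ × ℕ)), List.Chain GridStep a t →
    ∀ p ∈ a :: t, ∀ q ∈ a :: t,
      (p.1 ≤ q.1 ∧ p.2 ≤ q.2) ∨ (q.1 ≤ p.1 ∧ q.2 ≤ p.2) := by
  intro a t
  induction t generalizing a with
  | nil => intro _ p hp q hq; simp at hp hq; subst hp; subst hq; left; exact ⟨le_refl _, le_refl _⟩
  | cons c t ih =>
    intro h p hp q hq
    rcases List.chain_cons.mp h with ⟨hac, hct⟩
    have h1 := gridstep_le hac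
    rcases List.mem_cons.mp hp with hpa | hp
    · rcases List.mem_cons.mp hq with hqa | hq
      · left; rw [hpa, hqa]; exact ⟨le_refl _, le_refl _⟩
      · left
        have h2 := chain_head_le c t hct q hq
        rw [hpa]
        exact ⟨le_trans h1.1 h2.1, le_trans h1.2 h2.2⟩
    · rcases List.mem_cons.mp hq with hqa | hq
      · right
        have h2 := chain_head_le c t hct p hp
        rw [hqa]
        exact ⟨le_trans h1.1 h2.1, le_trans h1.2 h2.2⟩
      · exact ih c hct p hp q hq

lemma cycShift_bounds (n ℓ a : ℕ) (hn : 0 < n) :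
    1 ≤ cycShift n ℓ a ∧ cycShift n ℓ a ≤ n := by
  unfold cycShift
  have := Nat.mod_lt (a - 1 + ℓ) hn
  omega

lemma cycShift_inv (n ℓ ℓ' a : ℕ) (h : ℓ + ℓ' = n) (ha : 1 ≤ a) (ha' : a ≤ n) :
    cycShift n ℓ' (cycShift n ℓ a) = a := by
  unfold cycShift
  have h1 : (a - 1 + ℓ) % n + 1 - 1 = (a - 1 + ℓ) % n := by omega
  rw [h1, Nat.mod_add_mod]
  have h2 : a - 1 + ℓ + ℓ' = a - 1 + n := by omega
  rw [h2, Nat.add_mod_right, Nat.mod_eq_of_lt (by omega)]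
  omega

/-- Every perfect matching contained in the `ℓ`-shift of (the squares of) a Dyck path
belongs to `ℳ_n`. -/
theorem dyckpaths_stmt10 (n : ℕ) (hn : 0 < n) (L : List (ℕ × ℕ))
    (hL : IsDyckPath n L) (ℓ : ℕ) (hℓ : ℓ < n) (M : Finset (ℕ × ℕ))
    (hMpm : IsPM (M.image Prod.fst) (M.image Prod.snd) M)
    (hMsub : ∀ p ∈ M, ∃ q ∈ L, p = (cycShift n ℓ q.1, cycShift n ℓ q.2)) :
    MemDyckFamily n M := by
  obtain ⟨hlen, hhead, hlast, hchain, hdyck⟩ := hL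
  obtain ⟨a, t, rfl⟩ : ∃ a t, L = a :: t := by
    cases L with
    | nil => simp at hhead
    | cons a t => exact ⟨a, t, rfl⟩
  have hchain' : List.Chain GridStep a t := hchain
  -- bounds on squares of the path
  have hbound : ∀ q ∈ a :: t, 1 ≤ q.1 ∧ q.1 ≤ n ∧ 1 ≤ q.2 ∧ q.2 ≤ n := by
    intro q hq
    have ha : a = (1, 1) := by simpa using hhead
    have h1 := chain_head_le a t hchain' q hq
    have h2 := chain_le_last a t (n, n) hchain' hlast q hq
    rw [ha] at h1
    exact ⟨h1.1, h2.1, h1.2, h2.2⟩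
  set ℓ' := n - ℓ with hℓ'
  have hsum : ℓ + ℓ' = n := by omega
  have hsum' : ℓ' + ℓ = n := by omega
  set F : ℕ × ℕ → ℕ × ℕ := fun p => (cycShift n ℓ' p.1, cycShift n ℓ' p.2) with hF
  set G : ℕ × ℕ → ℕ × ℕ := fun p => (cycShift n ℓ p.1, cycShift n ℓ p.2) with hG
  -- key: for p ∈ M, F p is a square of the path and G (F p) = p
  have hkey : ∀ p ∈ M, F p ∈ a :: t ∧ G (F p) = p := by
    intro p hp
    obtain ⟨q, hqL, hpq⟩ := hMsub p hp
    have hb := hbound q hqL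
    have hFp : F p = q := by
      rw [hpq]
      simp only [hF]
      rw [cycShift_inv n ℓ ℓ' q.1 hsum hb.1 hb.2.1,
          cycShift_inv n ℓ ℓ' q.2 hsum hb.2.2.1 hb.2.2.2]
    refine ⟨hFp ▸ hqL, ?_⟩
    rw [hFp, hpq]
  set M₀ : Finset (ℕ × ℕ) := M.image F with hM₀
  have hM₀L : ∀ r ∈ M₀, r ∈ a :: t := by
    intro r hr
    obtain ⟨p, hp, rfl⟩ := Finset.mem_image.mp hr
    exact (hkey p hp).1
  have hM₀G : ∀ r ∈ M₀, G r ∈ M := by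
    intro r hr
    obtain ⟨p, hp, rfl⟩ := Finset.mem_image.mp hr
    rw [(hkey p hp).2]; exact hp
  have hM₀b : ∀ r ∈ M₀, 1 ≤ r.1 ∧ r.1 ≤ n ∧ 1 ≤ r.2 ∧ r.2 ≤ n := fun r hr =>
    hbound r (hM₀L r hr)
  -- injectivity of cycShift n ℓ on [1, n]
  have hinj : ∀ x y : ℕ, 1 ≤ x → x ≤ n → 1 ≤ y → y ≤ n →
      cycShift n ℓ x = cycShift n ℓ y → x = y := by
    intro x y hx1 hx2 hy1 hy2 hxy
    have h3 := cycShift_inv n ℓ ℓ' x hsum hx1 hx2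
    have h4 := cycShift_inv n ℓ ℓ' y hsum hy1 hy2
    rw [hxy] at h3
    omega
  -- uniqueness in M₀ of partner of a given first coordinate
  have huniq1 : ∀ i j j' : ℕ, (i, j) ∈ M₀ → (i, j') ∈ M₀ → j = j' := by
    intro i j j' hj hj'
    have hGj := hM₀G _ hj
    have hGj' := hM₀G _ hj'
    have hb := hM₀b _ hj
    have hb' := hM₀b _ hj'
    have hiI : cycShift n ℓ i ∈ M.image Prod.fst :=
      Finset.mem_image.mpr ⟨_, hGj, rfl⟩
    obtain ⟨w, hw, hwu⟩ := hMpm.2.1 _ hiI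
    have e1 : cycShift n ℓ j = w := hwu _ hGj
    have e2 : cycShift n ℓ j' = w := hwu _ hGj'
    exact hinj j j' hb.2.2.1 hb.2.2.2 hb'.2.2.1 hb'.2.2.2 (by rw [e1, e2])
  have huniq2 : ∀ i i' j : ℕ, (i, j) ∈ M₀ → (i', j) ∈ M₀ → i = i' := by
    intro i i' j hj hj'
    have hGj := hM₀G _ hj
    have hGj' := hM₀G _ hj'
    have hb := hM₀b _ hj
    have hb' := hM₀b _ hj'
    have hjJ : cycShift n ℓ j ∈ M.image Prod.snd :=
      Finset.mem_image.mpr ⟨_, hGj, rfl⟩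
    obtain ⟨w, hw, hwu⟩ := hMpm.2.2 _ hjJ
    have e1 : cycShift n ℓ i = w := hwu _ hGj
    have e2 : cycShift n ℓ i' = w := hwu _ hGj'
    exact hinj i i' hb.1 hb.2.1 hb'.1 hb'.2.1 (by rw [e1, e2])
  refine ⟨ℓ, hℓ, M₀, ?_, ?_, ?_, ?_⟩
  · intro r hr
    have hb := hM₀b r hr
    simp only [Finset.mem_Icc]
    omega
  · refine ⟨?_, ?_, ?_⟩
    · intro r hr
      exact ⟨Finset.mem_image.mpr ⟨r, hr, rfl⟩, Finset.mem_image.mpr ⟨r, hr, rfl⟩⟩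
    · intro i hi
      obtain ⟨r, hr, hri⟩ := Finset.mem_image.mp hi
      refine ⟨r.2, by rw [← hri]; exact hr, fun j hj => ?_⟩
      exact huniq1 i j r.2 hj (by rw [← hri]; exact hr)
    · intro j hj
      obtain ⟨r, hr, hrj⟩ := Finset.mem_image.mp hj
      refine ⟨r.1, by rw [← hrj]; exact hr, fun i hi => ?_⟩
      exact huniq2 i r.1 j hi (by rw [← hrj]; exact hr)
  · constructor
    · intro p hp q hq hlt
      have hcmp := chain_comp a t hchain' p (hM₀L p hp) q (hM₀L q hq)
      have h2 : p.2 ≤ q.2 := by rcases hcmp with h | h <;> omega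
      rcases lt_or_eq_of_le h2 with h | h
      · exact h
      · exfalso
        have := huniq2 p.1 q.1 p.2 (by simpa using hp) (by rw [h]; simpa using hq)
        omega
    · intro p hp
      exact hdyck p (hM₀L p hp)
  · rw [hM₀, Finset.image_image]
    symm
    apply Finset.image_congr (g := id) ?_ |>.trans (Finset.image_id)
    intro p hp
    exact (hkey p hp).2
end

section
/- For all positive integers r and n, the number N of (rn,n)-Dyck paths satisfies ((r+1)n − 1)·N = binom((r+1)n − 1, n); that is, N equals the rational Catalan number Cat(n, rn−1) = (1/(rn−1+n))·binom(rn−1+n, n). -/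
/-- `L` is (the sequence of squares of) an `(rn, n)`-Dyck path in the `rn × n` grid:
`rn + n - 1` squares from `(1,1)` to `(rn, n)`, each obtained from the previous one
by a unit step, with every square `(i,j)` satisfying `i ≤ r * j`. -/
def IsRatDyckPath (r n : ℕ) (L : List (ℕ × ℕ)) : Prop :=
  L.length = r * n + n - 1 ∧
  L.head? = some (1, 1) ∧
  L.getLast? = some (r * n, n) ∧
  L.Chain' GridStep ∧
  (∀ p ∈ L, p.1 ≤ r * p.2)

/-!
A path is determined by its word of steps read from the square `(1, 0)` below its start. This word
has length `L = (r + 1) n - 1` and `n` up steps, and the path stays in the region `i ≤ r j` exactly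
when every nonempty prefix has positive weight, an up step weighing `r` and a right step `-1`.
The whole word has weight `r n - (L - n) = 1`, so by the cycle lemma exactly one of its `L` cyclic
shifts has all prefix weights positive. Counting the pairs (word with `n` up steps, shift making it
positive) in two ways gives `L * N = binom(L, n)`.
-/

open Finset

section CycleLemma

variable {a : ℕ → ℤ} {L : ℕ}

def PrefixSumsPos (a : ℕ → ℤ) (L k : ℕ) : Prop :=
  ∀ j < L, 0 < ∑ i ∈ range (j + 1), a (k + i)

instance (a : ℕ → ℤ) (L k : ℕ) : Decidable (PrefixSumsPos a L k) :=
  inferInstanceAs (Decidable (∀ j < L, _))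

lemma sum_range_add_period (ha : Function.Periodic a L) (m : ℕ) :
    ∑ i ∈ range (m + L), a i = ∑ i ∈ range m, a i + ∑ i ∈ range L, a i := by
  rw [add_comm m, sum_range_add, add_comm (∑ i ∈ range L, a i)]
  congr 1
  exact sum_congr rfl fun i _ => by rw [add_comm, ha]

lemma prefixSumsPos_iff {k : ℕ} :
    PrefixSumsPos a L k ↔ ∀ j < L, ∑ i ∈ range k, a i < ∑ i ∈ range (k + j + 1), a i :=
  forall₂_congr fun j _ => by rw [add_assoc, sum_range_add a k, lt_add_iff_pos_right]

-- `S k < S k₂ < S (k + L) = S k + 1`, where `S` is the prefix sum of `a`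
lemma not_prefixSumsPos_of_lt (ha : Function.Periodic a L) (hsum : ∑ i ∈ range L, a i = 1)
    {k k₂ : ℕ} (hk : k < k₂) (hk₂ : k₂ < L)
    (hpos : PrefixSumsPos a L k) : ¬ PrefixSumsPos a L k₂ := by
  rw [prefixSumsPos_iff] at hpos ⊢
  intro hpos₂
  have h₁ := hpos (k₂ - k - 1) (by omega)
  have h₂ := hpos₂ (k + L - k₂ - 1) (by omega)
  rw [show k + (k₂ - k - 1) + 1 = k₂ by omega] at h₁
  rw [show k₂ + (k + L - k₂ - 1) + 1 = k + L by omega, sum_range_add_period ha, hsum] at h₂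
  omega

/-- The cycle lemma of Dvoretzky and Motzkin. -/
theorem existsUnique_prefixSumsPos (ha : Function.Periodic a L) (hsum : ∑ i ∈ range L, a i = 1) :
    ∃! k, k < L ∧ PrefixSumsPos a L k := by
  set S : ℕ → ℤ := fun m => ∑ i ∈ range m, a i
  have hS : ∀ m, S (m + L) = S m + 1 := fun m => by simp only [S, sum_range_add_period ha, hsum]
  have hL : (range L).Nonempty := nonempty_range_iff.2 (by rintro rfl; simp at hsum)
  obtain ⟨m, hmL, hmin⟩ := (range L).exists_min_image S hL
  -- the last minimiser of `S` on `[0, L)` is the starting point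
  obtain ⟨k, hk, hlast⟩ := ((range L).filter (S · = S m)).exists_max_image id ⟨m, by simp [hmL]⟩
  simp only [mem_filter, mem_range, id] at hk hlast hmin
  have hpos : PrefixSumsPos a L k := by
    refine prefixSumsPos_iff.2 fun j hj => ?_
    change S k < S (k + j + 1)
    rcases lt_or_ge (k + j + 1) L with h | h
    · have hne : S (k + j + 1) ≠ S m := fun he => by have := hlast _ ⟨h, he⟩; omega
      have := hmin _ h
      omega
    · obtain ⟨t, ht⟩ : ∃ t, k + j + 1 = t + L := ⟨k + j + 1 - L, by omega⟩
      have := hmin t (by omega)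
      rw [ht, hS]
      omega
  refine ⟨k, ⟨hk.1, hpos⟩, fun k' ⟨hk', hpos'⟩ => ?_⟩
  rcases lt_trichotomy k' k with h | h | h
  · exact absurd hpos (not_prefixSumsPos_of_lt ha hsum h hk.1 hpos')
  · exact h
  · exact absurd hpos' (not_prefixSumsPos_of_lt ha hsum h hk' hpos)

end CycleLemma

section Walk

/-- `false` is a step right, `true` a step up. -/
def displacement (u : List Bool) : ℕ × ℕ := (u.count false, u.count true)

def walk (p : ℕ × ℕ) : List Bool → List (ℕ × ℕ)
  | [] => []
  | b :: w => (p + displacement [b]) :: walk (p + displacement [b]) w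

@[simp] lemma displacement_append (u v : List Bool) :
    displacement (u ++ v) = displacement u + displacement v := by
  simp [displacement, List.count_append]

lemma gridStep_add_displacement (p : ℕ × ℕ) (b : Bool) : GridStep p (p + displacement [b]) := by
  cases b <;> simp [GridStep, displacement, Prod.ext_iff]

@[simp] lemma length_walk (p : ℕ × ℕ) (w : List Bool) : (walk p w).length = w.length := by
  induction w generalizing p <;> simp [walk, *]

lemma walk_eq_map_range (p : ℕ × ℕ) (w : List Bool) :
    walk p w = (List.range w.length).map fun j => p + displacement (w.take (j + 1)) := by
  induction w generalizing p with
  | nil => rfl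
  | cons b w ih =>
    rw [walk, ih, List.length_cons, List.range_succ_eq_map]
    simp [add_assoc, ← displacement_append]

lemma mem_walk {p q : ℕ × ℕ} {w : List Bool} :
    q ∈ walk p w ↔ ∃ j < w.length, q = p + displacement (w.take (j + 1)) := by
  simp [walk_eq_map_range, eq_comm]

lemma getLast?_walk (p : ℕ × ℕ) {w : List Bool} (hw : w ≠ []) :
    (walk p w).getLast? = some (p + displacement w) := by
  rw [walk_eq_map_range, List.getLast?_map, List.getLast?_range, if_neg (by simpa using hw)]
  simp [Nat.sub_add_cancel (List.length_pos_iff.2 hw)]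

lemma walk_injective (p : ℕ × ℕ) : Function.Injective (walk p) := by
  intro w w' h
  induction w generalizing p w' with
  | nil => cases w' <;> simp_all [walk]
  | cons b w ih =>
    cases w' with
    | nil => simp [walk] at h
    | cons b' w' =>
      obtain ⟨hb, hw⟩ := List.cons_eq_cons.1 h
      have hbb' : b = b' := by cases b <;> cases b' <;> simp_all [displacement]
      subst hbb'
      rw [ih _ hw]

lemma isChain_cons_walk (p : ℕ × ℕ) (w : List Bool) : (p :: walk p w).IsChain GridStep := by
  induction w generalizing p with
  | nil => simp [walk]
  | cons b w ih => exact List.isChain_cons_cons.2 ⟨gridStep_add_displacement p b, ih _⟩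

lemma exists_walk_eq_of_isChain {p : ℕ × ℕ} {P : List (ℕ × ℕ)}
    (hP : (p :: P).IsChain GridStep) : ∃ w, walk p w = P := by
  induction P generalizing p with
  | nil => exact ⟨[], rfl⟩
  | cons q P ih =>
    obtain ⟨hpq, hP⟩ := List.isChain_cons_cons.1 hP
    obtain ⟨w, rfl⟩ := ih hP
    obtain ⟨b, rfl⟩ : ∃ b, q = p + displacement [b] := by
      rcases hpq with rfl | rfl
      · exact ⟨false, by simp [displacement, Prod.ext_iff]⟩
      · exact ⟨true, by simp [displacement, Prod.ext_iff]⟩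
    exact ⟨b :: w, rfl⟩

end Walk

section DyckWord

variable {r n : ℕ}

/-- The walk from `(1, 0)` along `w` stays in the region `i ≤ r * j`. -/
def IsDyckWord (r : ℕ) (w : List Bool) : Prop :=
  ∀ j < w.length, (w.take (j + 1)).count false < r * (w.take (j + 1)).count true

lemma isRatDyckPath_walk (hr : 0 < r) (hn : 0 < n) {w : List Bool}
    (hlen : w.length = r * n + n - 1) (hcount : w.count true = n) (hw : IsDyckWord r w) :
    IsRatDyckPath r n (walk (1, 0) w) := by
  obtain ⟨b, w', rfl⟩ :=
    List.exists_cons_of_ne_nil (List.ne_nil_of_mem (List.count_pos_iff.1 (hcount ▸ hn)))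
  obtain rfl : b = true := by
    have := hw 0 (by simp)
    cases b <;> simp_all
  have hsplit := List.count_true_add_count_false (true :: w')
  refine ⟨by simpa using hlen, by simp [walk, displacement], ?_,
    (isChain_cons_walk (1, 0) (true :: w')).tail, ?_⟩
  · rw [getLast?_walk _ (List.cons_ne_nil _ _)]
    have : 0 < r * n := Nat.mul_pos hr hn
    simp only [displacement, Option.some.injEq, Prod.ext_iff, Prod.fst_add, Prod.snd_add]
    omega
  · intro q hq
    obtain ⟨j, hj, rfl⟩ := mem_walk.1 hq
    have := hw j hj
    simp only [displacement, Prod.fst_add, Prod.snd_add, zero_add]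
    omega

lemma exists_walk_eq_of_isRatDyckPath {P : List (ℕ × ℕ)} (hP : IsRatDyckPath r n P) :
    ∃ w, w.length = r * n + n - 1 ∧ w.count true = n ∧ IsDyckWord r w ∧ walk (1, 0) w = P := by
  obtain ⟨hlen, hhead, hlast, hchain, hbound⟩ := hP
  obtain ⟨P, rfl⟩ : ∃ P', P = (1, 1) :: P' := by cases P <;> simp_all
  obtain ⟨w, hwP⟩ := exists_walk_eq_of_isChain (p := (1, 0)) (P := (1, 1) :: P)
    (List.isChain_cons_cons.2 ⟨Or.inr rfl, hchain⟩)
  rw [← hwP] at hlen hlast hbound ⊢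
  have hw : w ≠ [] := by rintro rfl; simp [walk] at hwP
  have hend := getLast?_walk (1, 0) hw
  rw [hlast] at hend
  refine ⟨w, by simpa using hlen, ?_, fun j hj => ?_, rfl⟩
  · simp only [displacement, Option.some.injEq, Prod.ext_iff] at hend
    simpa using hend.2.symm
  · have := hbound _ (mem_walk.2 ⟨j, hj, rfl⟩)
    simp only [displacement, Prod.fst_add, Prod.snd_add, zero_add] at this
    omega

end DyckWord

section UpSteps

variable {L : ℕ}

def wordOf (U : Finset (Fin L)) : List Bool := List.ofFn fun i => decide (i ∈ U)

@[simp] lemma length_wordOf (U : Finset (Fin L)) : (wordOf U).length = L := List.length_ofFn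

lemma count_true_wordOf (U : Finset (Fin L)) : (wordOf U).count true = #U := by
  rw [wordOf, ← Multiset.coe_count, ← Fin.univ_val_map, Multiset.count_map]
  simp only [decide_eq_true_eq, eq_comm (a := true)]
  change #(univ.filter (· ∈ U)) = #U
  simp

lemma wordOf_injective : Function.Injective (wordOf : Finset (Fin L) → List Bool) := by
  intro U V h
  ext i
  simpa using congrFun (List.ofFn_injective h) i

lemma exists_wordOf_eq {w : List Bool} (hw : w.length = L) :
    ∃ U : Finset (Fin L), wordOf U = w := by
  subst hw
  exact ⟨univ.filter fun i => w[i], by simp [wordOf]⟩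

open Fin.NatCast Pointwise

variable [NeZero L] (r : ℕ) {n : ℕ}

def stepSeq (U : Finset (Fin L)) (i : ℕ) : ℤ := if (i : Fin L) ∈ U then r else -1

lemma periodic_stepSeq (U : Finset (Fin L)) : Function.Periodic (stepSeq r U) L := by
  intro i
  simp [stepSeq]

lemma stepSeq_neg_vadd (U : Finset (Fin L)) (k i : ℕ) :
    stepSeq r (-(k : Fin L) +ᵥ U) i = stepSeq r U (k + i) := by
  simp [stepSeq, Finset.mem_neg_vadd_finset_iff]

lemma sum_range_stepSeq (U : Finset (Fin L)) {j : ℕ} (hj : j ≤ L) :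
    ∑ i ∈ range j, stepSeq r U i
      = r * ((wordOf U).take j).count true - ((wordOf U).take j).count false := by
  induction j with
  | zero => simp
  | succ j ih =>
    have : (wordOf U)[j]? = some (decide ((j : Fin L) ∈ U)) := by
      have hcast : (j : Fin L) = ⟨j, hj⟩ := Fin.ext (Fin.val_cast_of_lt hj)
      simp [wordOf, hcast, show j < L from hj]
    rw [sum_range_succ, ih (by omega), List.take_add_one, List.count_append, List.count_append,
      this]
    by_cases h : (j : Fin L) ∈ U <;> simp [stepSeq, h] <;> ring

lemma prefixSumsPos_neg_vadd (U : Finset (Fin L)) (k : ℕ) :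
    PrefixSumsPos (stepSeq r (-(k : Fin L) +ᵥ U)) L 0 ↔ PrefixSumsPos (stepSeq r U) L k := by
  simp only [PrefixSumsPos, zero_add, stepSeq_neg_vadd]

lemma isDyckWord_wordOf_iff (U : Finset (Fin L)) :
    IsDyckWord r (wordOf U) ↔ PrefixSumsPos (stepSeq r U) L 0 := by
  simp only [IsDyckWord, PrefixSumsPos, length_wordOf, zero_add]
  exact forall₂_congr fun j hj => by rw [sum_range_stepSeq r U (j := j + 1) hj]; omega

lemma sum_range_stepSeq_eq_one (hL : L + 1 = (r + 1) * n) {U : Finset (Fin L)}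
    (hU : #U = n) : ∑ i ∈ range L, stepSeq r U i = 1 := by
  have hsplit := List.count_true_add_count_false (wordOf U)
  rw [sum_range_stepSeq r U le_rfl, List.take_of_length_le (length_wordOf U).le]
  rw [count_true_wordOf, hU, length_wordOf] at hsplit
  rw [count_true_wordOf, hU]
  zify at hL hsplit
  linear_combination -hL - hsplit

theorem card_mul_card_filter_prefixSumsPos (hL : L + 1 = (r + 1) * n) :
    L * #{U ∈ powersetCard n (univ : Finset (Fin L)) | PrefixSumsPos (stepSeq r U) L 0}
      = L.choose n := by
  set P := powersetCard n (univ : Finset (Fin L))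
  have hshift (k : ℕ) : #{U ∈ P | PrefixSumsPos (stepSeq r U) L k}
      = #{U ∈ P | PrefixSumsPos (stepSeq r U) L 0} :=
    card_equiv (AddAction.toPerm (-(k : Fin L))) fun U => by
      simp [P, card_vadd_finset, prefixSumsPos_neg_vadd]
  have hunique (U) (hU : U ∈ P) : #{k ∈ range L | PrefixSumsPos (stepSeq r U) L k} = 1 := by
    rw [card_eq_one_iff_existsUnique]
    simpa using existsUnique_prefixSumsPos (periodic_stepSeq r U)
      (sum_range_stepSeq_eq_one r hL (mem_powersetCard_univ.1 hU))
  calc L * #{U ∈ P | PrefixSumsPos (stepSeq r U) L 0}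
      = ∑ k ∈ range L, #{U ∈ P | PrefixSumsPos (stepSeq r U) L k} := by simp [hshift]
    _ = ∑ U ∈ P, #{k ∈ range L | PrefixSumsPos (stepSeq r U) L k} :=
      (sum_card_bipartiteAbove_eq_sum_card_bipartiteBelow _).symm
    _ = L.choose n := by simp [sum_congr rfl hunique, P]

lemma setOf_isRatDyckPath_eq_image (hr : 0 < r) (hn : 0 < n) (hL : L = r * n + n - 1) :
    {P | IsRatDyckPath r n P} = (walk (1, 0) ∘ wordOf) ''
      {U : Finset (Fin L) | U ∈ powersetCard n univ ∧ PrefixSumsPos (stepSeq r U) L 0} := by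
  ext P
  constructor
  · intro hP
    obtain ⟨w, hlen, hcount, hw, rfl⟩ := exists_walk_eq_of_isRatDyckPath hP
    obtain ⟨U, rfl⟩ := exists_wordOf_eq (hlen.trans hL.symm)
    refine ⟨U, ⟨?_, (isDyckWord_wordOf_iff r U).1 hw⟩, rfl⟩
    rwa [mem_powersetCard_univ, ← count_true_wordOf]
  · rintro ⟨U, ⟨hU, hpos⟩, rfl⟩
    refine isRatDyckPath_walk hr hn (by simp [hL]) ?_ ((isDyckWord_wordOf_iff r U).2 hpos)
    rwa [count_true_wordOf, ← mem_powersetCard_univ]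

end UpSteps

/-- The number `N` of `(rn, n)`-Dyck paths satisfies
`((r+1)n - 1) * N = binom((r+1)n - 1, n)`, i.e. `N` is the rational Catalan number
`Cat(n, rn - 1) = (1/(rn - 1 + n)) * binom(rn - 1 + n, n)`. -/
theorem dyckpaths_stmt12 (r n : ℕ) (hr : 0 < r) (hn : 0 < n) :
    ((r + 1) * n - 1) * {L : List (ℕ × ℕ) | IsRatDyckPath r n L}.ncard =
      Nat.choose ((r + 1) * n - 1) n := by
  set L := (r + 1) * n - 1
  have hL : L = r * n + n - 1 := by simp only [L, add_one_mul]
  have hL₁ : L + 1 = (r + 1) * n := Nat.sub_add_cancel (Nat.mul_pos r.succ_pos hn)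
  have : NeZero L := ⟨by have := Nat.mul_pos hr hn; omega⟩
  rw [setOf_isRatDyckPath_eq_image r hr hn hL,
    Set.ncard_image_of_injective _ ((walk_injective _).comp wordOf_injective),
    ← coe_filter, Set.ncard_coe_finset]
  exact card_mul_card_filter_prefixSumsPos r hL₁
end

section
/- Let n be a positive integer. There exists a real number c₀ > 1 such that for every real c ≥ c₀ the following holds: for all I, J ⊆ [n] with |I| = |J| and every perfect matching M between I and J with M ∈ ℳ_n, one has ∑_{(i,j)∈M} c^{((j−i) mod n)} < ∑_{(i,j)∈M'} c^{((j−i) mod n)} for every perfect matching M' ≠ M between I and J, where (j−i) mod n is taken in {0,…,n−1}. (Consequently, the height function h(e_i,e_j) = c^{((j−i) mod n)} induces the Dyck path triangulation as a regular triangulation.) -/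
section Aux

lemma isPM_erase {I J : Finset ℕ} {M : Finset (ℕ × ℕ)} (hM : IsPM I J M) {a b : ℕ}
    (hab : (a, b) ∈ M) : IsPM (I.erase a) (J.erase b) (M.erase (a, b)) := by
  obtain ⟨hmem, hI, hJ⟩ := hM
  refine ⟨?_, ?_, ?_⟩
  · intro p hp
    rw [Finset.mem_erase] at hp
    obtain ⟨hne, hpM⟩ := hp
    obtain ⟨h1, h2⟩ := hmem p hpM
    constructor
    · rw [Finset.mem_erase]
      refine ⟨fun h => hne ?_, h1⟩
      have := (hI a ((hmem _ hab).1)).unique (by rw [← h]; exact (show (p.1, p.2) ∈ M by simpa using hpM)) hab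
      exact Prod.ext h this
    · rw [Finset.mem_erase]
      refine ⟨fun h => hne ?_, h2⟩
      have := (hJ b ((hmem _ hab).2)).unique (by rw [← h]; exact (show (p.1, p.2) ∈ M by simpa using hpM)) hab
      exact Prod.ext this h
  · intro i hi
    rw [Finset.mem_erase] at hi
    obtain ⟨hia, hiI⟩ := hi
    obtain ⟨j, hj, huniq⟩ := hI i hiI
    refine ⟨j, ?_, ?_⟩
    · exact Finset.mem_erase.2 ⟨by simp [Prod.ext_iff]; intro h; exact absurd h hia, hj⟩
    · intro j' hj'
      exact huniq j' (Finset.mem_of_mem_erase hj')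
  · intro j hj
    rw [Finset.mem_erase] at hj
    obtain ⟨hjb, hjJ⟩ := hj
    obtain ⟨i, hi, huniq⟩ := hJ j hjJ
    refine ⟨i, ?_, ?_⟩
    · exact Finset.mem_erase.2 ⟨by simp [Prod.ext_iff]; intro _ h; exact absurd h hjb, hi⟩
    · intro i' hi'
      exact huniq i' (Finset.mem_of_mem_erase hi')

lemma isPM_swap {I J : Finset ℕ} {M' : Finset (ℕ × ℕ)} (hM : IsPM I J M') {a y x b : ℕ}
    (h1 : (a, y) ∈ M') (h2 : (x, b) ∈ M') (hax : a ≠ x) (hyb : y ≠ b) :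
    IsPM (I.erase a) (J.erase b) (insert (x, y) ((M'.erase (a, y)).erase (x, b))) := by
  obtain ⟨hmem, hI, hJ⟩ := hM
  have hxI : x ∈ I := (hmem _ h2).1
  have haI : a ∈ I := (hmem _ h1).1
  have hyJ : y ∈ J := (hmem _ h1).2
  have hbJ : b ∈ J := (hmem _ h2).2
  have key1 : ∀ p ∈ M', p.1 = a → p.2 = y := fun p hp h =>
    (hI a haI).unique (by rw [← h]; simpa using hp) h1
  have key2 : ∀ p ∈ M', p.2 = b → p.1 = x := fun p hp h =>
    (hJ b hbJ).unique (by rw [← h]; simpa using hp) h2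
  have key3 : ∀ p ∈ M', p.1 = x → p.2 = b := fun p hp h =>
    (hI x hxI).unique (by rw [← h]; simpa using hp) h2
  have key4 : ∀ p ∈ M', p.2 = y → p.1 = a := fun p hp h =>
    (hJ y hyJ).unique (by rw [← h]; simpa using hp) h1
  refine ⟨?_, ?_, ?_⟩
  · intro p hp
    rcases Finset.mem_insert.1 hp with h | h
    · subst h
      exact ⟨Finset.mem_erase.2 ⟨Ne.symm hax, hxI⟩, Finset.mem_erase.2 ⟨hyb, hyJ⟩⟩
    · rw [Finset.mem_erase, Finset.mem_erase] at h
      obtain ⟨hne2, hne1, hpM⟩ := h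
      refine ⟨Finset.mem_erase.2 ⟨fun h => hne1 ?_, (hmem _ hpM).1⟩,
              Finset.mem_erase.2 ⟨fun h => hne2 ?_, (hmem _ hpM).2⟩⟩
      · exact Prod.ext h (key1 p hpM h)
      · exact Prod.ext (key2 p hpM h) h
  · intro i hi
    rw [Finset.mem_erase] at hi
    obtain ⟨hia, hiI⟩ := hi
    by_cases hix : i = x
    · subst hix
      refine ⟨y, Finset.mem_insert_self _ _, ?_⟩
      intro j' hj'
      rcases Finset.mem_insert.1 hj' with h | h
      · exact (Prod.ext_iff.1 h).2
      · rw [Finset.mem_erase, Finset.mem_erase] at h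
        exact absurd (by rw [show j' = b from key3 _ h.2.2 rfl]) h.1
    · obtain ⟨j, hj, huniq⟩ := hI i hiI
      refine ⟨j, ?_, ?_⟩
      · refine Finset.mem_insert.2 (Or.inr ?_)
        refine Finset.mem_erase.2 ⟨?_, Finset.mem_erase.2 ⟨?_, hj⟩⟩
        · intro h; exact hix (Prod.ext_iff.1 h).1
        · intro h; exact hia (Prod.ext_iff.1 h).1
      · intro j' hj'
        rcases Finset.mem_insert.1 hj' with h | h
        · exact absurd (Prod.ext_iff.1 h).1 hix
        · exact huniq j' (Finset.mem_of_mem_erase (Finset.mem_of_mem_erase h))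
  · intro j hj
    rw [Finset.mem_erase] at hj
    obtain ⟨hjb, hjJ⟩ := hj
    by_cases hjy : j = y
    · subst hjy
      refine ⟨x, Finset.mem_insert_self _ _, ?_⟩
      intro i' hi'
      rcases Finset.mem_insert.1 hi' with h | h
      · exact (Prod.ext_iff.1 h).1
      · rw [Finset.mem_erase, Finset.mem_erase] at h
        exact absurd (by rw [show i' = a from key4 _ h.2.2 rfl]) h.2.1
    · obtain ⟨i, hi, huniq⟩ := hJ j hjJ
      refine ⟨i, ?_, ?_⟩
      · refine Finset.mem_insert.2 (Or.inr ?_)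
        refine Finset.mem_erase.2 ⟨?_, Finset.mem_erase.2 ⟨?_, hi⟩⟩
        · intro h; exact hjb (Prod.ext_iff.1 h).2
        · intro h; exact hjy (Prod.ext_iff.1 h).2
      · intro i' hi'
        rcases Finset.mem_insert.1 hi' with h | h
        · exact absurd (Prod.ext_iff.1 h).2 hjy
        · exact huniq i' (Finset.mem_of_mem_erase (Finset.mem_of_mem_erase h))

/-- The "ideal" (unwrapped) weight of a matching. -/
noncomputable def Zc (c : ℝ) (N : Finset (ℕ × ℕ)) : ℝ :=
  ∑ p ∈ N, c ^ (p.2 : ℤ) * c ^ (-(p.1 : ℤ))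

/-- Rearrangement core: a non-crossing perfect matching minimizes the ideal weight,
strictly among all other perfect matchings between the same sets. -/
lemma Zc_core (c : ℝ) (hc : 1 < c) : ∀ k : ℕ, ∀ I J : Finset ℕ, ∀ M M' : Finset (ℕ × ℕ),
    I.card = k → IsPM I J M → IsPM I J M' →
    (∀ p ∈ M, ∀ q ∈ M, p.1 < q.1 → p.2 < q.2) →
    Zc c M ≤ Zc c M' ∧ (M' ≠ M → Zc c M < Zc c M') := by
  intro k
  induction k with
  | zero =>
    intro I J M M' hcard hM hM' _
    have hI : I = ∅ := Finset.card_eq_zero.1 hcard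
    subst hI
    have hMe : M = ∅ := Finset.eq_empty_iff_forall_notMem.2 fun p hp => by
      simpa using (hM.1 p hp).1
    have hMe' : M' = ∅ := Finset.eq_empty_iff_forall_notMem.2 fun p hp => by
      simpa using (hM'.1 p hp).1
    subst hMe; subst hMe'
    exact ⟨le_refl _, fun h => absurd rfl h⟩
  | succ k ih =>
    intro I J M M' hcard hM hM' hnc
    have hIne : I.Nonempty := Finset.card_pos.1 (by omega)
    set a := I.min' hIne with ha
    have haI : a ∈ I := I.min'_mem hIne
    obtain ⟨ja, hja, hjau⟩ := hM.2.1 a haI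
    have hJne : J.Nonempty := ⟨ja, (hM.1 _ hja).2⟩
    set b := J.min' hJne with hb
    have hbJ : b ∈ J := J.min'_mem hJne
    obtain ⟨ib, hib, hibu⟩ := hM.2.2 b hbJ
    have hab : (a, b) ∈ M := by
      by_cases h : ib = a
      · rwa [h] at hib
      · exfalso
        have haib : a < ib := lt_of_le_of_ne (I.min'_le ib (hM.1 _ hib).1) (Ne.symm h)
        have := hnc (a, ja) hja (ib, b) hib haib
        exact absurd (J.min'_le ja (hM.1 _ hja).2) (not_le.2 this)
    obtain ⟨y, hy, hyu⟩ := hM'.2.1 a haI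
    obtain ⟨x, hx, hxu⟩ := hM'.2.2 b hbJ
    have hcard' : (I.erase a).card = k := by rw [Finset.card_erase_of_mem haI]; omega
    have hNpm : IsPM (I.erase a) (J.erase b) (M.erase (a, b)) := isPM_erase hM hab
    have hnc' : ∀ p ∈ M.erase (a, b), ∀ q ∈ M.erase (a, b), p.1 < q.1 → p.2 < q.2 :=
      fun p hp q hq => hnc p (Finset.mem_of_mem_erase hp) q (Finset.mem_of_mem_erase hq)
    have hZM : Zc c (M.erase (a, b)) + c ^ (b : ℤ) * c ^ (-(a : ℤ)) = Zc c M :=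
      Finset.sum_erase_add M _ hab
    by_cases hyb : y = b
    · subst hyb
      have hxa : x = a := (hxu a hy).symm
      have hab' : (a, b) ∈ M' := hy
      have hN'pm : IsPM (I.erase a) (J.erase b) (M'.erase (a, b)) := isPM_erase hM' hab'
      obtain ⟨hle, hlt⟩ := ih (I.erase a) (J.erase b) (M.erase (a, b)) (M'.erase (a, b))
        hcard' hNpm hN'pm hnc'
      have hZM' : Zc c (M'.erase (a, b)) + c ^ (b : ℤ) * c ^ (-(a : ℤ)) = Zc c M' :=
        Finset.sum_erase_add M' _ hab'
      constructor
      · nlinarith [hle]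
      · intro hne
        have : M'.erase (a, b) ≠ M.erase (a, b) := by
          intro h
          apply hne
          rw [← Finset.insert_erase hab', ← Finset.insert_erase hab, h]
        nlinarith [hlt this]
    · have hxa : x ≠ a := by
        intro h
        exact hyb (hyu b (by rwa [h] at hx)).symm
      have hby : b < y := lt_of_le_of_ne (J.min'_le y (hM'.1 _ hy).2) (fun h => hyb h.symm)
      have hax : a < x := lt_of_le_of_ne (I.min'_le x (hM'.1 _ hx).1) (fun h => hxa h.symm)
      have hxyne : (x, y) ∉ M' := by
        intro h
        exact hxa ((hM'.2.2 y (hM'.1 _ hy).2).unique h hy)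
      set N' := insert (x, y) ((M'.erase (a, y)).erase (x, b)) with hN'
      have hN'pm : IsPM (I.erase a) (J.erase b) N' :=
        isPM_swap hM' hy hx (fun h => hxa h.symm) hyb
      obtain ⟨hle, _⟩ := ih (I.erase a) (J.erase b) (M.erase (a, b)) N' hcard' hNpm hN'pm hnc'
      have hxb_mem : (x, b) ∈ M'.erase (a, y) :=
        Finset.mem_erase.2 ⟨by simp [Prod.ext_iff]; intro h; exact absurd h hxa, hx⟩
      have hsum1 : Zc c ((M'.erase (a, y)).erase (x, b)) + c ^ (b : ℤ) * c ^ (-(x : ℤ)) =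
          Zc c (M'.erase (a, y)) := Finset.sum_erase_add _ _ hxb_mem
      have hsum2 : Zc c (M'.erase (a, y)) + c ^ (y : ℤ) * c ^ (-(a : ℤ)) = Zc c M' :=
        Finset.sum_erase_add _ _ hy
      have hxy_notin : (x, y) ∉ (M'.erase (a, y)).erase (x, b) := fun h =>
        hxyne (Finset.mem_of_mem_erase (Finset.mem_of_mem_erase h))
      have hsum3 : Zc c N' = c ^ (y : ℤ) * c ^ (-(x : ℤ)) +
          Zc c ((M'.erase (a, y)).erase (x, b)) := Finset.sum_insert hxy_notin
      have hP : c ^ (b : ℤ) < c ^ (y : ℤ) := zpow_lt_zpow_right₀ hc (by exact_mod_cast hby)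
      have hR : c ^ (-(x : ℤ)) < c ^ (-(a : ℤ)) := zpow_lt_zpow_right₀ hc (by
        simp only [neg_lt_neg_iff]; exact_mod_cast hax)
      have hswap : c ^ (y : ℤ) * c ^ (-(x : ℤ)) + c ^ (b : ℤ) * c ^ (-(a : ℤ)) <
          c ^ (y : ℤ) * c ^ (-(a : ℤ)) + c ^ (b : ℤ) * c ^ (-(x : ℤ)) := by
        nlinarith [mul_pos (sub_pos.2 hP) (sub_pos.2 hR)]
      have : Zc c M < Zc c M' := by nlinarith [hle]
      exact ⟨le_of_lt this, fun _ => this⟩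

lemma cycShift_memIcc {n : ℕ} (hn : 0 < n) (ℓ : ℕ) {a : ℕ} :
    cycShift n ℓ a ∈ Finset.Icc 1 n := by
  simp only [Finset.mem_Icc]
  unfold cycShift
  have := Nat.mod_lt (a - 1 + ℓ) hn
  omega

lemma cycShift_comp {n : ℕ} (hn : 0 < n) {ℓ ℓ' : ℕ} (hs : ℓ + ℓ' = n) {a : ℕ}
    (ha : a ∈ Finset.Icc 1 n) : cycShift n ℓ' (cycShift n ℓ a) = a := by
  simp only [Finset.mem_Icc] at ha
  unfold cycShift
  rw [Nat.add_sub_cancel, Nat.mod_add_mod]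
  have h1 : a - 1 + ℓ + ℓ' = (a - 1) + n := by omega
  rw [h1, Nat.add_mod_right, Nat.mod_eq_of_lt (by omega)]
  omega

lemma cycShift_cast {n : ℕ} (ℓ : ℕ) {a : ℕ} (ha : 1 ≤ a) :
    ((cycShift n ℓ a : ℕ) : ZMod n) = (a : ZMod n) + (ℓ : ZMod n) := by
  unfold cycShift
  push_cast [ZMod.natCast_mod]
  have : ((a - 1 : ℕ) : ZMod n) = (a : ZMod n) - 1 := by
    have h : (a - 1) + 1 = a := by omega
    calc ((a - 1 : ℕ) : ZMod n) = ((a - 1 : ℕ) : ZMod n) + 1 - 1 := by ring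
    _ = (((a - 1) + 1 : ℕ) : ZMod n) - 1 := by push_cast; ring
    _ = (a : ZMod n) - 1 := by rw [h]
  rw [this]; ring

lemma exp_cast {n : ℕ} {i j : ℕ} (hi : i ≤ n) :
    (((j + n - i) % n : ℕ) : ZMod n) = (j : ZMod n) - (i : ZMod n) := by
  rw [ZMod.natCast_mod]
  have h : (j + n - i) + i = j + n := by omega
  have h2 : (((j + n - i) + i : ℕ) : ZMod n) = ((j + n : ℕ) : ZMod n) := by rw [h]
  push_cast [ZMod.natCast_self] at h2
  linear_combination h2

lemma exp_invariant {n : ℕ} (hn : 0 < n) (ℓ : ℕ) {i j : ℕ} (hi : i ∈ Finset.Icc 1 n)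
    (hj : j ∈ Finset.Icc 1 n) :
    (cycShift n ℓ j + n - cycShift n ℓ i) % n = (j + n - i) % n := by
  haveI : NeZero n := ⟨hn.ne'⟩
  have hi' := Finset.mem_Icc.1 hi
  have hj' := Finset.mem_Icc.1 hj
  have hsi := Finset.mem_Icc.1 (cycShift_memIcc hn ℓ (a := i))
  have h1 : (((cycShift n ℓ j + n - cycShift n ℓ i) % n : ℕ) : ZMod n) =
      (((j + n - i) % n : ℕ) : ZMod n) := by
    rw [exp_cast hsi.2, exp_cast hi'.2, cycShift_cast ℓ hj'.1, cycShift_cast ℓ hi'.1]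
    ring
  have l1 : (cycShift n ℓ j + n - cycShift n ℓ i) % n < n := Nat.mod_lt _ hn
  have l2 : (j + n - i) % n < n := Nat.mod_lt _ hn
  have := congrArg ZMod.val h1
  rwa [ZMod.val_cast_of_lt l1, ZMod.val_cast_of_lt l2] at this

lemma bridge_eq {c : ℝ} (hc : 0 < c) {n i j : ℕ} (h1 : 1 ≤ i) (hij : i ≤ j) (hjn : j ≤ n) :
    c ^ ((j + n - i) % n) = c ^ (j : ℤ) * c ^ (-(i : ℤ)) := by
  have hn : 0 < n := by omega
  have h2 : j + n - i = (j - i) + n := by omega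
  have h3 : (j + n - i) % n = j - i := by rw [h2, Nat.add_mod_right, Nat.mod_eq_of_lt (by omega)]
  rw [h3, ← zpow_natCast c (j - i), ← zpow_add₀ hc.ne']
  congr 1
  push_cast [Nat.cast_sub hij]
  ring

lemma bridge_le {c : ℝ} (hc : 1 < c) {n i j : ℕ} (h1 : 1 ≤ i) (hin : i ≤ n) (h2 : 1 ≤ j)
    (hjn : j ≤ n) : c ^ (j : ℤ) * c ^ (-(i : ℤ)) ≤ c ^ ((j + n - i) % n) := by
  have hc0 : 0 < c := lt_trans one_pos hc
  by_cases hij : i ≤ j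
  · exact le_of_eq (bridge_eq hc0 h1 hij hjn).symm
  · push_neg at hij
    have h3 : (j + n - i) % n = j + n - i := Nat.mod_eq_of_lt (by omega)
    rw [h3, ← zpow_natCast c (j + n - i), ← zpow_add₀ hc0.ne']
    have : (j : ℤ) + (-(i : ℤ)) ≤ ((j + n - i : ℕ) : ℤ) := by
      push_cast [Nat.cast_sub (show i ≤ j + n by omega)]
      omega
    exact zpow_le_zpow_right₀ (le_of_lt hc) this

lemma isPM_image {I J : Finset ℕ} {M : Finset (ℕ × ℕ)} (hM : IsPM I J M) (g : ℕ → ℕ)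
    (hgI : ∀ i1 ∈ I, ∀ i2 ∈ I, g i1 = g i2 → i1 = i2)
    (hgJ : ∀ j1 ∈ J, ∀ j2 ∈ J, g j1 = g j2 → j1 = j2) :
    IsPM (I.image g) (J.image g) (M.image fun p => (g p.1, g p.2)) := by
  obtain ⟨hmem, hI, hJ⟩ := hM
  refine ⟨?_, ?_, ?_⟩
  · intro p hp
    obtain ⟨q, hq, hqe⟩ := Finset.mem_image.1 hp
    subst hqe
    exact ⟨Finset.mem_image_of_mem g (hmem q hq).1, Finset.mem_image_of_mem g (hmem q hq).2⟩
  · intro i' hi'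
    obtain ⟨i, hiI, hie⟩ := Finset.mem_image.1 hi'
    subst hie
    obtain ⟨j, hj, huniq⟩ := hI i hiI
    refine ⟨g j, Finset.mem_image.2 ⟨(i, j), hj, rfl⟩, ?_⟩
    intro j' hj'
    obtain ⟨q, hq, hqe⟩ := Finset.mem_image.1 hj'
    have h1 : q.1 = i := hgI q.1 (hmem q hq).1 i hiI (congrArg Prod.fst hqe)
    have h2 : q.2 = j := huniq q.2 (by rw [← h1]; simpa using hq)
    exact (congrArg Prod.snd hqe).symm.trans (congrArg g h2)
  · intro j' hj'
    obtain ⟨j, hjJ, hje⟩ := Finset.mem_image.1 hj'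
    subst hje
    obtain ⟨i, hi, huniq⟩ := hJ j hjJ
    refine ⟨g i, Finset.mem_image.2 ⟨(i, j), hi, rfl⟩, ?_⟩
    intro i' hi'
    obtain ⟨q, hq, hqe⟩ := Finset.mem_image.1 hi'
    have h2 : q.2 = j := hgJ q.2 (hmem q hq).2 j hjJ (congrArg Prod.snd hqe)
    have h1 : q.1 = i := huniq q.1 (by rw [← h2]; simpa using hq)
    exact (congrArg Prod.fst hqe).symm.trans (congrArg g h1)

end Aux

/-- For `c` large enough, the height function `h(e_i, e_j) = c^((j - i) mod n)` selects,
among all perfect matchings between `I` and `J`, precisely the matching of `ℳ_n` as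
the one of strictly minimal total height. (Hence it induces the Dyck path triangulation
as a regular triangulation.) -/
theorem dyckpaths_stmt15 (n : ℕ) (hn : 0 < n) :
    ∃ c₀ : ℝ, 1 < c₀ ∧ ∀ c : ℝ, c₀ ≤ c →
      ∀ I J : Finset ℕ, I ⊆ Finset.Icc 1 n → J ⊆ Finset.Icc 1 n → I.card = J.card →
        ∀ M : Finset (ℕ × ℕ), IsPM I J M → MemDyckFamily n M →
          ∀ M' : Finset (ℕ × ℕ), IsPM I J M' → M' ≠ M →
            ∑ p ∈ M, c ^ ((p.2 + n - p.1) % n) <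
              ∑ p ∈ M', c ^ ((p.2 + n - p.1) % n) := by
  refine ⟨2, one_lt_two, ?_⟩
  intro c hc2 I J hI hJ _ M hM hfam M' hM' hne
  have hc : 1 < c := lt_of_lt_of_le one_lt_two hc2
  have hc0 : 0 < c := lt_trans one_pos hc
  obtain ⟨ℓ, hℓ, M₀, hrange, hpm0, hncwi, hMeq⟩ := hfam
  set f : ℕ → ℕ := cycShift n ℓ with hf
  set g : ℕ → ℕ := cycShift n (n - ℓ) with hg
  have hfg : ∀ a ∈ Finset.Icc 1 n, g (f a) = a :=
    fun a ha => cycShift_comp hn (by omega) ha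
  have hgf : ∀ a ∈ Finset.Icc 1 n, f (g a) = a :=
    fun a ha => cycShift_comp hn (by omega) ha
  have hfinj : ∀ a ∈ Finset.Icc 1 n, ∀ b ∈ Finset.Icc 1 n, f a = f b → a = b := by
    intro a ha b hb h
    rw [← hfg a ha, ← hfg b hb, h]
  have hginj : ∀ a ∈ Finset.Icc 1 n, ∀ b ∈ Finset.Icc 1 n, g a = g b → a = b := by
    intro a ha b hb h
    rw [← hgf a ha, ← hgf b hb, h]
  have hM'range : ∀ p ∈ M', p.1 ∈ Finset.Icc 1 n ∧ p.2 ∈ Finset.Icc 1 n :=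
    fun p hp => ⟨hI (hM'.1 p hp).1, hJ (hM'.1 p hp).2⟩
  set I₀ := M₀.image Prod.fst with hI₀
  set J₀ := M₀.image Prod.snd with hJ₀
  set M'' := M'.image (fun p => (g p.1, g p.2)) with hM''
  -- I = I₀.image f, J = J₀.image f
  have hIeq : I = I₀.image f := by
    ext i
    constructor
    · intro hiI
      obtain ⟨j, hj, _⟩ := hM.2.1 i hiI
      rw [hMeq] at hj
      obtain ⟨q, hq, hqe⟩ := Finset.mem_image.1 hj
      exact Finset.mem_image.2 ⟨q.1, Finset.mem_image_of_mem _ hq, congrArg Prod.fst hqe⟩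
    · intro h
      obtain ⟨i₀, hi₀, hie⟩ := Finset.mem_image.1 h
      obtain ⟨q, hq, hqe⟩ := Finset.mem_image.1 hi₀
      have : (f q.1, f q.2) ∈ M := by
        rw [hMeq]; exact Finset.mem_image.2 ⟨q, hq, rfl⟩
      have := (hM.1 _ this).1
      rwa [hqe, hie] at this
  have hJeq : J = J₀.image f := by
    ext j
    constructor
    · intro hjJ
      obtain ⟨i, hi, _⟩ := hM.2.2 j hjJ
      rw [hMeq] at hi
      obtain ⟨q, hq, hqe⟩ := Finset.mem_image.1 hi
      exact Finset.mem_image.2 ⟨q.2, Finset.mem_image_of_mem _ hq, congrArg Prod.snd hqe⟩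
    · intro h
      obtain ⟨j₀, hj₀, hje⟩ := Finset.mem_image.1 h
      obtain ⟨q, hq, hqe⟩ := Finset.mem_image.1 hj₀
      have : (f q.1, f q.2) ∈ M := by
        rw [hMeq]; exact Finset.mem_image.2 ⟨q, hq, rfl⟩
      have := (hM.1 _ this).2
      rwa [hqe, hje] at this
  have hI₀sub : ∀ i ∈ I₀, i ∈ Finset.Icc 1 n := by
    intro i hi
    obtain ⟨q, hq, hqe⟩ := Finset.mem_image.1 hi
    rw [← hqe]; exact (hrange q hq).1
  have hJ₀sub : ∀ j ∈ J₀, j ∈ Finset.Icc 1 n := by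
    intro j hj
    obtain ⟨q, hq, hqe⟩ := Finset.mem_image.1 hj
    rw [← hqe]; exact (hrange q hq).2
  have hIimg : I.image g = I₀ := by
    rw [hIeq, Finset.image_image]
    rw [show I₀.image (g ∘ f) = I₀.image id from
      Finset.image_congr (fun x hx => hfg x (hI₀sub x hx))]
    exact Finset.image_id
  have hJimg : J.image g = J₀ := by
    rw [hJeq, Finset.image_image]
    rw [show J₀.image (g ∘ f) = J₀.image id from
      Finset.image_congr (fun x hx => hfg x (hJ₀sub x hx))]
    exact Finset.image_id
  have hPM'' : IsPM I₀ J₀ M'' := by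
    have := isPM_image hM' g
      (fun i1 h1 i2 h2 => hginj i1 (hI h1) i2 (hI h2))
      (fun j1 h1 j2 h2 => hginj j1 (hJ h1) j2 (hJ h2))
    rwa [hIimg, hJimg] at this
  -- M'' ≠ M₀
  have hM''M' : M''.image (fun p => (f p.1, f p.2)) = M' := by
    rw [hM'', Finset.image_image]
    rw [show M'.image ((fun p : ℕ × ℕ => (f p.1, f p.2)) ∘ (fun p : ℕ × ℕ => (g p.1, g p.2)))
        = M'.image id from Finset.image_congr (fun p hp => by
      simp only [Function.comp_apply, id_eq]
      rw [hgf p.1 (hM'range p hp).1, hgf p.2 (hM'range p hp).2])]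
    exact Finset.image_id
  have hM''ne : M'' ≠ M₀ := by
    intro h
    apply hne
    rw [← hM''M', h, ← hMeq]
  -- sum equalities
  have hsinj : ∀ p ∈ M₀, ∀ q ∈ M₀, (f p.1, f p.2) = (f q.1, f q.2) → p = q := by
    intro p hp q hq h
    have h1 := hfinj p.1 (hrange p hp).1 q.1 (hrange q hq).1 (congrArg Prod.fst h)
    have h2 := hfinj p.2 (hrange p hp).2 q.2 (hrange q hq).2 (congrArg Prod.snd h)
    exact Prod.ext h1 h2
  have htinj : ∀ p ∈ M', ∀ q ∈ M', (g p.1, g p.2) = (g q.1, g q.2) → p = q := by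
    intro p hp q hq h
    have h1 := hginj p.1 (hM'range p hp).1 q.1 (hM'range q hq).1 (congrArg Prod.fst h)
    have h2 := hginj p.2 (hM'range p hp).2 q.2 (hM'range q hq).2 (congrArg Prod.snd h)
    exact Prod.ext h1 h2
  have hA : ∑ p ∈ M, c ^ ((p.2 + n - p.1) % n) = ∑ p ∈ M₀, c ^ ((p.2 + n - p.1) % n) := by
    rw [hMeq, Finset.sum_image hsinj]
    exact Finset.sum_congr rfl fun p hp => by
      rw [exp_invariant hn ℓ (hrange p hp).1 (hrange p hp).2]
  have hB : ∑ p ∈ M'', c ^ ((p.2 + n - p.1) % n) = ∑ p ∈ M', c ^ ((p.2 + n - p.1) % n) := by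
    rw [hM'', Finset.sum_image htinj]
    exact Finset.sum_congr rfl fun p hp => by
      rw [exp_invariant hn (n - ℓ) (hM'range p hp).1 (hM'range p hp).2]
  have hC : ∑ p ∈ M₀, c ^ ((p.2 + n - p.1) % n) = Zc c M₀ := by
    refine Finset.sum_congr rfl fun p hp => ?_
    have h1 := Finset.mem_Icc.1 (hrange p hp).1
    have h2 := Finset.mem_Icc.1 (hrange p hp).2
    exact bridge_eq hc0 h1.1 (hncwi.2 p hp) h2.2
  have hD : Zc c M'' ≤ ∑ p ∈ M'', c ^ ((p.2 + n - p.1) % n) := by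
    refine Finset.sum_le_sum fun p hp => ?_
    obtain ⟨q, hq, hqe⟩ := Finset.mem_image.1 hp
    have h1 : p.1 ∈ Finset.Icc 1 n := by
      rw [← hqe]; exact cycShift_memIcc hn _
    have h2 : p.2 ∈ Finset.Icc 1 n := by
      rw [← hqe]; exact cycShift_memIcc hn _
    have h1' := Finset.mem_Icc.1 h1
    have h2' := Finset.mem_Icc.1 h2
    exact bridge_le hc h1'.1 h1'.2 h2'.1 h2'.2
  have hE : Zc c M₀ < Zc c M'' :=
    (Zc_core c hc I₀.card I₀ J₀ M₀ M'' rfl hpm0 hPM'' hncwi.1).2 hM''ne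
  calc ∑ p ∈ M, c ^ ((p.2 + n - p.1) % n) = Zc c M₀ := by rw [hA, hC]
  _ < Zc c M'' := hE
  _ ≤ ∑ p ∈ M'', c ^ ((p.2 + n - p.1) % n) := hD
  _ = ∑ p ∈ M', c ^ ((p.2 + n - p.1) % n) := hB
end
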